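/- arXiv:2206.11001 — 8 statements merged into one kernel-verified Lean document; each statement's English description precedes it below -/
import Mathlib

section
/- Let R be a (not necessarily commutative) ring, let M be a left R-module of finite length, and let A₁, A₂, B₁, B₂ be submodules of M such that A₁ and A₂ are coprime, the natural maps A₁ ⊕ A₂ → M and B₁ ⊕ B₂ → M are both isomorphisms (internal direct sums), and A₁ is isomorphic to B₁ as R-modules. Then the natural maps A₁ ⊕ B₂ → M and B₁ ⊕ A₂ → M are also isomorphisms. -/
/-- `D` is a divisor of `M` if `M ≅ D ⊕ N` for some `R`-module `N`. -/
def IsDivisor (R : Type u) [Ring R] (D : Type w) [AddCommGroup D] [Module R D]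
    (M : Type v) [AddCommGroup M] [Module R M] : Prop :=
  ∃ (N : Type v) (_ : AddCommGroup N) (_ : Module R N), Nonempty (M ≃ₗ[R] D × N)

/-- Let `M` be an `R`-module of finite length and `A₁, A₂, B₁, B₂ ⊆ M`
submodules with `A₁` and `A₂` coprime, `A₁ ⊕ A₂ = B₁ ⊕ B₂ = M` (internally)
and `A₁ ≅ B₁`. Then `A₁ ⊕ B₂ = B₁ ⊕ A₂ = M` (internally). -/
theorem swap_complement
    {R : Type u} [Ring R] {M : Type v} [AddCommGroup M] [Module R M]
    (hM : IsFiniteLength R M) (A₁ A₂ B₁ B₂ : Submodule R M)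
    (hcop : ∀ (D : Type v) (_ : AddCommGroup D) (_ : Module R D),
      IsDivisor R D A₁ → IsDivisor R D A₂ → Subsingleton D)
    (hA : Function.Bijective (A₁.subtype.coprod A₂.subtype))
    (hB : Function.Bijective (B₁.subtype.coprod B₂.subtype))
    (hiso : Nonempty (A₁ ≃ₗ[R] B₁)) :
    Function.Bijective (A₁.subtype.coprod B₂.subtype) ∧
      Function.Bijective (B₁.subtype.coprod A₂.subtype) := by
  obtain ⟨hNoeth, hArt⟩ := isFiniteLength_iff_isNoetherian_isArtinian.mp hM
  haveI := hNoeth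
  haveI := hArt
  obtain ⟨e⟩ := hiso
  let eA : (A₁ × A₂) ≃ₗ[R] M := LinearEquiv.ofBijective _ hA
  let eB : (B₁ × B₂) ≃ₗ[R] M := LinearEquiv.ofBijective _ hB
  let p₁ : M →ₗ[R] A₁ := (LinearMap.fst R A₁ A₂) ∘ₗ eA.symm.toLinearMap
  let p₂ : M →ₗ[R] A₂ := (LinearMap.snd R A₁ A₂) ∘ₗ eA.symm.toLinearMap
  let q₁ : M →ₗ[R] B₁ := (LinearMap.fst R B₁ B₂) ∘ₗ eB.symm.toLinearMap
  let q₂ : M →ₗ[R] B₂ := (LinearMap.snd R B₁ B₂) ∘ₗ eB.symm.toLinearMap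
  have hpsum : ∀ m : M, (↑(p₁ m) : M) + ↑(p₂ m) = m := by
    intro m
    have h := eA.apply_symm_apply m
    rw [show eA (eA.symm m) = (A₁.subtype.coprod A₂.subtype) (eA.symm m) from rfl,
      LinearMap.coprod_apply] at h
    exact h
  have hqsum : ∀ m : M, (↑(q₁ m) : M) + ↑(q₂ m) = m := by
    intro m
    have h := eB.apply_symm_apply m
    rw [show eB (eB.symm m) = (B₁.subtype.coprod B₂.subtype) (eB.symm m) from rfl,
      LinearMap.coprod_apply] at h
    exact h
  have hApair : ∀ a : A₁, eA.symm ↑a = (a, 0) := by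
    intro a
    rw [LinearEquiv.symm_apply_eq]
    show (↑a : M) = (A₁.subtype.coprod A₂.subtype) (a, (0 : A₂))
    simp
  have hApair' : ∀ a : A₂, eA.symm ↑a = (0, a) := by
    intro a
    rw [LinearEquiv.symm_apply_eq]
    show (↑a : M) = (A₁.subtype.coprod A₂.subtype) ((0 : A₁), a)
    simp
  have hBpair : ∀ b : B₁, eB.symm ↑b = (b, 0) := by
    intro b
    rw [LinearEquiv.symm_apply_eq]
    show (↑b : M) = (B₁.subtype.coprod B₂.subtype) (b, (0 : B₂))
    simp
  have hBpair' : ∀ b : B₂, eB.symm ↑b = (0, b) := by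
    intro b
    rw [LinearEquiv.symm_apply_eq]
    show (↑b : M) = (B₁.subtype.coprod B₂.subtype) ((0 : B₁), b)
    simp
  have hp₁A : ∀ a : A₁, p₁ ↑a = a := fun a => by
    show (eA.symm ↑a).1 = a; rw [hApair]
  have hp₂A : ∀ a : A₂, p₂ ↑a = a := fun a => by
    show (eA.symm ↑a).2 = a; rw [hApair']
  have hq₁B : ∀ b : B₁, q₁ ↑b = b := fun b => by
    show (eB.symm ↑b).1 = b; rw [hBpair]
  have hq₁B' : ∀ b : B₂, q₁ ↑b = 0 := fun b => by
    show (eB.symm ↑b).1 = 0; rw [hBpair']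
  have hp₁A' : ∀ a : A₂, p₁ ↑a = 0 := fun a => by
    show (eA.symm ↑a).1 = 0; rw [hApair']
  have hmemA₂ : ∀ m : M, p₁ m = 0 → m ∈ A₂ := by
    intro m hm
    have h := hpsum m
    rw [hm] at h
    simp only [Submodule.coe_zero, zero_add] at h
    rw [← h]; exact (p₂ m).2
  have hmemB₂ : ∀ m : M, q₁ m = 0 → m ∈ B₂ := by
    intro m hm
    have h := hqsum m
    rw [hm] at h
    simp only [Submodule.coe_zero, zero_add] at h
    rw [← h]; exact (q₂ m).2
  -- the two key maps
  let φ : B₁ →ₗ[R] A₁ := p₁ ∘ₗ B₁.subtype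
  let g : A₁ →ₗ[R] B₁ := q₁ ∘ₗ A₁.subtype
  let u : Module.End R B₁ := g ∘ₗ φ
  let v : Module.End R B₁ := q₁ ∘ₗ A₂.subtype ∘ₗ p₂ ∘ₗ B₁.subtype
  have hid : ∀ x : B₁, u x + v x = x := by
    intro x
    have h1 : u x + v x = q₁ ((↑(p₁ ↑x) : M) + ↑(p₂ ↑x)) := by
      rw [map_add]; rfl
    rw [h1, hpsum, hq₁B]
  -- Fitting decomposition for u
  obtain ⟨n, hn1, hcompl⟩ :
      ∃ n, 1 ≤ n ∧ IsCompl (LinearMap.ker (u ^ n)) (LinearMap.range (u ^ n)) := by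
    obtain ⟨N, hN⟩ := Filter.eventually_atTop.mp u.eventually_isCompl_ker_pow_range_pow
    exact ⟨max 1 N, le_max_left _ _, hN _ (le_max_right _ _)⟩
  set K : Submodule R B₁ := LinearMap.ker (u ^ n) with hKdef
  have huK : ∀ x ∈ K, u x ∈ K := by
    intro x hx
    have hcomm : (u ^ n) (u x) = u ((u ^ n) x) := by
      rw [← Module.End.mul_apply, ← Module.End.mul_apply, ← pow_succ, ← pow_succ']
    simp only [hKdef, LinearMap.mem_ker] at hx ⊢
    rw [hcomm, hx, map_zero]
  have hvsub : ∀ x : B₁, v x = x - u x := by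
    intro x
    have h := hid x
    rw [add_comm] at h
    exact eq_sub_of_add_eq h
  have hvK : ∀ x ∈ K, v x ∈ K := by
    intro x hx
    rw [hvsub]
    exact K.sub_mem hx (huK x hx)
  let vK : K →ₗ[R] K := v.restrict hvK
  have hvKval : ∀ x : K, (vK x : B₁) = v ↑x := fun x => rfl
  have hvKinj : Function.Injective vK := by
    rw [← LinearMap.ker_eq_bot, LinearMap.ker_eq_bot']
    intro x hx0
    have hx0' : v ↑x = 0 := by
      have := congrArg (Subtype.val) hx0
      rwa [hvKval] at this
    have hux : u ↑x = ↑x := by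
      have h := hid (↑x : B₁)
      rwa [hx0', add_zero] at h
    have hpow : ∀ k : ℕ, (u ^ k) ↑x = ↑x := by
      intro k
      induction k with
      | zero => simp
      | succ k ih => rw [pow_succ, Module.End.mul_apply, hux, ih]
    have hxK : (u ^ n) ↑x = 0 := x.2
    have : (↑x : B₁) = 0 := by rw [← hpow n, hxK]
    exact Subtype.ext this
  have hvKsurj : Function.Surjective vK :=
    IsArtinian.surjective_of_injective_endomorphism vK hvKinj
  let vKe : K ≃ₗ[R] K := LinearEquiv.ofBijective vK ⟨hvKinj, hvKsurj⟩
  let a : K →ₗ[R] A₂ := p₂ ∘ₗ B₁.subtype ∘ₗ K.subtype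
  let πK : B₁ →ₗ[R] K := Submodule.linearProjOfIsCompl K (LinearMap.range (u ^ n)) hcompl
  let b : A₂ →ₗ[R] K := vKe.symm.toLinearMap ∘ₗ πK ∘ₗ q₁ ∘ₗ A₂.subtype
  have hba : ∀ x : K, b (a x) = x := by
    intro x
    have h1 : q₁ ((a x : M)) = v ↑x := rfl
    have hmem : v ↑x ∈ K := hvK _ x.2
    have h2 : πK (v ↑x) = ⟨v ↑x, hmem⟩ :=
      Submodule.linearProjOfIsCompl_apply_left hcompl ⟨v ↑x, hmem⟩
    have h3 : (⟨v ↑x, hmem⟩ : K) = vK x := Subtype.ext rfl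
    show vKe.symm (πK (q₁ ((a x : M)))) = x
    rw [h1, h2, h3]
    exact vKe.symm_apply_apply x
  -- K is a divisor of A₂
  let G : (K × LinearMap.ker b) →ₗ[R] A₂ := a.coprod (LinearMap.ker b).subtype
  have hGbij : Function.Bijective G := by
    constructor
    · rw [← LinearMap.ker_eq_bot, LinearMap.ker_eq_bot']
      rintro ⟨k, y⟩ hz
      have hz' : a k + ↑y = 0 := hz
      have hbk : k = 0 := by
        have := congrArg b hz'
        rw [map_add, hba, map_zero] at this
        have hy0 : b ↑y = 0 := y.2
        rwa [hy0, add_zero] at this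
      have hy : (↑y : A₂) = 0 := by
        rw [hbk, map_zero, zero_add] at hz'
        exact hz'
      have : y = 0 := Subtype.ext hy
      rw [hbk, this]
      rfl
    · intro x
      have hmem : x - a (b x) ∈ LinearMap.ker b := by
        rw [LinearMap.mem_ker, map_sub, hba, sub_self]
      refine ⟨(b x, ⟨x - a (b x), hmem⟩), ?_⟩
      show a (b x) + (x - a (b x)) = x
      abel
  let eqA₂ : A₂ ≃ₗ[R] (K × LinearMap.ker b) := (LinearEquiv.ofBijective G hGbij).symm
  -- K is a divisor of A₁
  let eqA₁ : A₁ ≃ₗ[R] (K × LinearMap.range (u ^ n)) :=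
    e.trans (Submodule.prodEquivOfIsCompl K (LinearMap.range (u ^ n)) hcompl).symm
  have hsub : Subsingleton K :=
    hcop K inferInstance inferInstance
      ⟨LinearMap.range (u ^ n), inferInstance, inferInstance, ⟨eqA₁⟩⟩
      ⟨LinearMap.ker b, inferInstance, inferInstance, ⟨eqA₂⟩⟩
  have hKbot : ∀ x : B₁, (u ^ n) x = 0 → x = 0 := by
    intro x hx
    have : (⟨x, hx⟩ : K) = ⟨0, K.zero_mem⟩ := Subsingleton.elim _ _
    exact congrArg Subtype.val this
  have huinj : Function.Injective u := by
    rw [← LinearMap.ker_eq_bot, LinearMap.ker_eq_bot']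
    intro x hx
    refine hKbot x ?_
    have : u ^ n = u ^ (n - 1) * u := by
      rw [← pow_succ, Nat.sub_add_cancel hn1]
    rw [this, Module.End.mul_apply, hx, map_zero]
  have husurj : Function.Surjective u :=
    IsArtinian.surjective_of_injective_endomorphism u huinj
  have hφinj : Function.Injective φ := by
    have : Function.Injective (⇑g ∘ ⇑φ) := by
      rwa [← LinearMap.coe_comp]
    exact this.of_comp
  have hgsurj : Function.Surjective g := by
    have : Function.Surjective (⇑g ∘ ⇑φ) := by
      rwa [← LinearMap.coe_comp]
    exact this.of_comp
  have hginj : Function.Injective g := by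
    have h1 : Function.Surjective (e.symm.toLinearMap ∘ₗ g) := by
      rw [LinearMap.coe_comp]
      exact e.symm.surjective.comp hgsurj
    have h2 := IsNoetherian.injective_of_surjective_endomorphism _ h1
    rw [LinearMap.coe_comp] at h2
    exact h2.of_comp
  have hφsurj : Function.Surjective φ := by
    have h1 : Function.Injective (φ ∘ₗ (e : A₁ →ₗ[R] B₁)) := by
      rw [LinearMap.coe_comp]
      exact hφinj.comp e.injective
    have h2 := IsArtinian.surjective_of_injective_endomorphism _ h1
    rw [LinearMap.coe_comp] at h2
    exact h2.of_comp
  constructor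
  · constructor
    · rw [← LinearMap.ker_eq_bot, LinearMap.ker_eq_bot']
      rintro ⟨x, y⟩ hz
      have hz' : (↑x : M) + ↑y = 0 := hz
      have hgx : g x = 0 := by
        have h := congrArg q₁ hz'
        rw [map_add, hq₁B' y, add_zero, map_zero] at h
        exact h
      have hx0 : x = 0 := hginj (by rw [hgx, map_zero])
      have hy0 : (↑y : M) = 0 := by
        rw [hx0] at hz'
        simpa using hz'
      have hy : y = 0 := Subtype.ext (by simp [hy0])
      rw [hx0, hy]
      rfl
    · intro m
      obtain ⟨x, hx⟩ := hgsurj (q₁ m)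
      have hmem : m - ↑x ∈ B₂ := by
        refine hmemB₂ _ ?_
        rw [map_sub, show q₁ ↑x = g x from rfl, hx, sub_self]
      refine ⟨(x, ⟨m - ↑x, hmem⟩), ?_⟩
      show (↑x : M) + (m - ↑x) = m
      abel
  · constructor
    · rw [← LinearMap.ker_eq_bot, LinearMap.ker_eq_bot']
      rintro ⟨x, y⟩ hz
      have hz' : (↑x : M) + ↑y = 0 := hz
      have hφx : φ x = 0 := by
        have h := congrArg p₁ hz'
        rw [map_add, hp₁A' y, add_zero, map_zero] at h
        exact h
      have hx0 : x = 0 := hφinj (by rw [hφx, map_zero])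
      have hy0 : (↑y : M) = 0 := by
        rw [hx0] at hz'
        simpa using hz'
      have hy : y = 0 := Subtype.ext (by simp [hy0])
      rw [hx0, hy]
      rfl
    · intro m
      obtain ⟨x, hx⟩ := hφsurj (p₁ m)
      have hmem : m - ↑x ∈ A₂ := by
        refine hmemA₂ _ ?_
        rw [map_sub, show p₁ ↑x = φ x from rfl, hx, sub_self]
      refine ⟨(⟨x, x.2⟩, ⟨m - ↑x, hmem⟩), ?_⟩
      show (↑x : M) + (m - ↑x) = m
      abel
end

section
/- Let R be a (not necessarily commutative) ring, let 𝒮 be a saturated multiplicative class of left R-modules, let M be a left R-module of finite length, and let (A₁,A₂) and (B₁,B₂) be maximal elements of Dec_𝒮(M). Then (A₁,B₂) and (B₁,A₂) are also maximal elements of Dec_𝒮(M). -/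
/-- For submodules `C`, `D`, `N` of `M`, `C ⊕ D = N` internally: the natural map
`C ⊕ D → M` is injective with image `N`. -/
def InternalSum {R : Type u} [Ring R] {M : Type v} [AddCommGroup M] [Module R M]
    (C D N : Submodule R M) : Prop :=
  Function.Injective (C.subtype.coprod D.subtype) ∧
    LinearMap.range (C.subtype.coprod D.subtype) = N

/-- The partial order on `Dec(M)`: `(D,N) ≤ (D',N')` iff there is a submodule `C` with
`D = D' ⊕ C` and `N ⊕ C = N'` (internally). -/
def DecLE {R : Type u} [Ring R] {M : Type v} [AddCommGroup M] [Module R M]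
    (p q : Submodule R M × Submodule R M) : Prop :=
  ∃ C : Submodule R M, InternalSum q.1 C p.1 ∧ InternalSum p.2 C q.2

/-- Membership in `Dec_𝒮(M)`: `(M₁,M₂)` is a decomposition of `M` (the natural map
`M₁ ⊕ M₂ → M` is an isomorphism) with `M₂ ∈ 𝒮`. -/
def DecSMem {R : Type u} [Ring R] {M : Type v} [AddCommGroup M] [Module R M]
    (S : (D : Type v) → [AddCommGroup D] → [Module R D] → Prop)
    (p : Submodule R M × Submodule R M) : Prop :=
  Function.Bijective (p.1.subtype.coprod p.2.subtype) ∧ S p.2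

/-- `p` is a maximal element of the partially ordered set `Dec_𝒮(M)`. -/
def DecSMax {R : Type u} [Ring R] {M : Type v} [AddCommGroup M] [Module R M]
    (S : (D : Type v) → [AddCommGroup D] → [Module R D] → Prop)
    (p : Submodule R M × Submodule R M) : Prop :=
  DecSMem S p ∧ ∀ q, DecSMem S q → DecLE p q → q = p

/-! If `(P, Q)` is maximal in `Dec_𝒮(M)`, then `P` has no nonzero direct summand in `𝒮`
(it could be moved over to `Q`), and conversely. Given maximal `(A₁, A₂)` and `(B₁, B₂)`, let
`θ` be the endomorphism of `B₁` obtained by projecting onto `A₁` along `A₂` and then onto `B₁`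
along `B₂`. Then `1 - θ` factors through `A₂`, so the identity of the Fitting component
`ker θⁿ` of `B₁` factors through `A₂` as well: `ker θⁿ` is a direct summand of `A₂ ∈ 𝒮`, and
also of `B₁`, hence zero. Thus `θ` is an automorphism, which gives `B₁ ∩ A₂ = 0` and
`B₁ ⊆ A₁ + B₂`; together with the symmetric statements, `M = A₁ ⊕ B₂ = B₁ ⊕ A₂`. -/

namespace Submodule

variable {R : Type*} [Ring R] {M : Type*} [AddCommGroup M] [Module R M] {p q : Submodule R M}

theorem injective_coprod_subtype_iff :
    Function.Injective (p.subtype.coprod q.subtype) ↔ Disjoint p q := by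
  refine ⟨fun h => disjoint_def.mpr fun x hp hq => ?_, fun h => ?_⟩
  · have := @h (⟨x, hp⟩, 0) (0, ⟨x, hq⟩) (by simp)
    simpa using congrArg (fun y => (y.1 : M)) this
  · rw [← LinearMap.ker_eq_bot, LinearMap.ker_coprod_of_disjoint_range _ _ (by simpa using h)]
    simp

theorem bijective_coprod_subtype_iff :
    Function.Bijective (p.subtype.coprod q.subtype) ↔ IsCompl p q := by
  rw [Function.Bijective, injective_coprod_subtype_iff, ← LinearMap.range_eq_top,
    ← sup_eq_range, isCompl_iff, codisjoint_iff]

noncomputable def supEquivProdOfDisjoint (h : Disjoint p q) : ↥(p ⊔ q) ≃ₗ[R] p × q :=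
  ((LinearEquiv.ofInjective _ (injective_coprod_subtype_iff.mpr h)).trans
    (LinearEquiv.ofEq _ _ (sup_eq_range p q).symm)).symm

end Submodule

section ModuleClass

variable {R : Type u} [Ring R] (S : (D : Type v) → [AddCommGroup D] → [Module R D] → Prop)

def IsProdClosed : Prop :=
  ∀ (M' N D : Type v) [AddCommGroup M'] [Module R M'] [AddCommGroup N] [Module R N]
    [AddCommGroup D] [Module R D], Nonempty (M' ≃ₗ[R] N × D) → S N → S D → S M'

def IsSummandClosed : Prop :=
  ∀ (M' D : Type v) [AddCommGroup M'] [Module R M'] [AddCommGroup D] [Module R D],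
    S M' → (∃ (N : Type v) (_ : AddCommGroup N) (_ : Module R N),
      Nonempty (M' ≃ₗ[R] D × N)) → S D

variable {S}

theorem IsSummandClosed.of_equiv (hS : IsSummandClosed S)
    {X Y : Type v} [AddCommGroup X] [Module R X] [AddCommGroup Y] [Module R Y]
    (e : X ≃ₗ[R] Y) (hX : S X) : S Y :=
  hS X Y hX ⟨PUnit, inferInstance, inferInstance,
    ⟨e.trans (LinearEquiv.prodUnique (M := Y) (M₂ := PUnit.{v+1})).symm⟩⟩

theorem IsSummandClosed.of_comp_eq_id (hS : IsSummandClosed S)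
    {K A : Type v} [AddCommGroup K] [Module R K] [AddCommGroup A] [Module R A]
    (u : K →ₗ[R] A) (v : A →ₗ[R] K) (hvu : v ∘ₗ u = LinearMap.id) (hA : S A) : S K := by
  have hidem : IsIdempotentElem (u ∘ₗ v) :=
    LinearMap.ext fun x => congrArg u (LinearMap.congr_fun hvu (v x))
  have hrange : LinearMap.range (u ∘ₗ v) = LinearMap.range u :=
    LinearMap.range_comp_of_range_eq_top u
      (LinearMap.range_eq_top.mpr (Function.LeftInverse.surjective (LinearMap.congr_fun hvu)))
  have hsummand : S (LinearMap.range (u ∘ₗ v)) :=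
    hS A _ hA ⟨_, inferInstance, inferInstance,
      ⟨(Submodule.prodEquivOfIsCompl _ _ (LinearMap.IsIdempotentElem.isCompl hidem)).symm⟩⟩
  exact hS.of_equiv ((LinearEquiv.ofEq _ _ hrange).trans
    (LinearEquiv.ofLeftInverse (LinearMap.congr_fun hvu)).symm) hsummand

end ModuleClass

section Decomposition

variable {R : Type u} [Ring R] {M : Type v} [AddCommGroup M] [Module R M]
  {S : (D : Type v) → [AddCommGroup D] → [Module R D] → Prop}

theorem internalSum_iff {C D N : Submodule R M} :
    InternalSum C D N ↔ Disjoint C D ∧ C ⊔ D = N := by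
  rw [InternalSum, Submodule.injective_coprod_subtype_iff, ← Submodule.sup_eq_range]

theorem decSMem_iff {P Q : Submodule R M} : DecSMem S (P, Q) ↔ IsCompl P Q ∧ S Q := by
  rw [DecSMem, Submodule.bijective_coprod_subtype_iff]

variable (S) in
def HasNoSummandIn (P : Submodule R M) : Prop :=
  ∀ C D : Submodule R M, Disjoint D C → D ⊔ C = P → S C → C = ⊥

theorem decSMax_iff (hmul : IsProdClosed S) (hsat : IsSummandClosed S)
    {P Q : Submodule R M} :
    DecSMax S (P, Q) ↔ IsCompl P Q ∧ S Q ∧ HasNoSummandIn S P := by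
  rw [DecSMax, decSMem_iff, and_assoc]
  refine and_congr_right fun hPQ => and_congr_right fun hQ => ⟨fun hmax => ?_, fun hP => ?_⟩
  · intro C D hDC hDCP hC
    have hCP : C ≤ P := hDCP ▸ le_sup_right
    have hQC : Disjoint Q C := hPQ.disjoint.symm.mono_right hCP
    have hdec : DecSMem S (D, Q ⊔ C) := by
      refine decSMem_iff.mpr ⟨⟨?_, ?_⟩, hmul _ _ _ ⟨Submodule.supEquivProdOfDisjoint hQC⟩ hQ hC⟩
      · rw [sup_comm]
        exact hDC.disjoint_sup_right_of_disjoint_sup_left (hDCP ▸ hPQ.disjoint)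
      · rw [codisjoint_iff, sup_comm Q, ← sup_assoc, hDCP, hPQ.sup_eq_top]
    have hle : DecLE (P, Q) (D, Q ⊔ C) :=
      ⟨C, internalSum_iff.mpr ⟨hDC, hDCP⟩, internalSum_iff.mpr ⟨hQC, rfl⟩⟩
    have hCQ : C ≤ Q := sup_eq_left.mp (congrArg Prod.snd (hmax _ hdec hle))
    exact (hPQ.disjoint.mono_left hCP).eq_bot_of_le hCQ
  · rintro ⟨D, N⟩ hDN ⟨C, hPDC, hNQC⟩
    obtain ⟨hDC, hDCP⟩ := internalSum_iff.mp hPDC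
    obtain ⟨hQC, rfl⟩ := internalSum_iff.mp hNQC
    have hC : S C := hsat _ _ (decSMem_iff.mp hDN).2 ⟨Q, inferInstance, inferInstance,
      ⟨(Submodule.supEquivProdOfDisjoint hQC).trans (LinearEquiv.prodComm R Q C)⟩⟩
    obtain rfl := hP C D hDC hDCP hC
    simpa using hDCP

theorem HasNoSummandIn.eq_bot_of_isCompl (hsat : IsSummandClosed S) {P : Submodule R M}
    (hP : HasNoSummandIn S P) {K I : Submodule R P} (hKI : IsCompl K I) (hK : S K) : K = ⊥ := by
  have hinj := P.injective_subtype
  refine (Submodule.map_injective_of_injective hinj).eq_iff.mp ?_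
  rw [Submodule.map_bot]
  refine hP _ (I.map P.subtype) ?_ ?_ (hsat.of_equiv (K.equivMapOfInjective _ hinj) hK)
  · rw [disjoint_iff, ← Submodule.map_inf _ hinj, hKI.symm.inf_eq_bot, Submodule.map_bot]
  · rw [← Submodule.map_sup, hKI.symm.sup_eq_top, Submodule.map_subtype_top]

end Decomposition

section Exchange

variable {R : Type u} [Ring R] {S : (D : Type v) → [AddCommGroup D] → [Module R D] → Prop}

theorem bijective_of_one_sub_eq_comp {A B : Type v} [AddCommGroup A] [Module R A]
    [AddCommGroup B] [Module R B] [IsNoetherian R B] [IsArtinian R B]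
    (hsat : IsSummandClosed S) (hA : S A) (hB : ∀ K I : Submodule R B, IsCompl K I → S K → K = ⊥)
    {θ : Module.End R B} (f : B →ₗ[R] A) (h : A →ₗ[R] B) (hθ : h ∘ₗ f = 1 - θ) :
    Function.Bijective θ := by
  obtain ⟨n, hn, hKI⟩ :=
    ((Filter.eventually_ge_atTop 1).and θ.eventually_isCompl_ker_pow_range_pow).exists
  set K := LinearMap.ker (θ ^ n)
  set g : Module.End R B := ∑ i ∈ Finset.range n, θ ^ i
  have hret : (K.projectionOnto _ hKI ∘ₗ h) ∘ₗ (f ∘ₗ g ∘ₗ K.subtype) = LinearMap.id := by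
    ext k
    have hk : h (f (g k)) = k := by
      rw [← LinearMap.comp_apply h f, hθ, ← Module.End.mul_apply, mul_neg_geom_sum,
        LinearMap.sub_apply, LinearMap.mem_ker.mp k.2, sub_zero, Module.End.one_apply]
    simp [hk]
  have hK : K = ⊥ := hB K _ hKI (hsat.of_comp_eq_id _ _ hret hA)
  refine IsArtinian.bijective_of_injective_endomorphism θ (LinearMap.ker_eq_bot.mp ?_)
  obtain ⟨m, rfl⟩ := Nat.exists_eq_add_of_le' hn
  rw [eq_bot_iff, ← hK]
  simpa only [K, pow_succ, Module.End.mul_eq_comp] using LinearMap.ker_le_ker_comp θ (θ ^ m)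

variable {M : Type v} [AddCommGroup M] [Module R M] {A₁ A₂ B₁ B₂ : Submodule R M}

open Submodule

noncomputable def exchangeEnd (hA : IsCompl A₁ A₂) (hB : IsCompl B₁ B₂) : Module.End R B₁ :=
  B₁.projectionOnto B₂ hB ∘ₗ A₁.projection A₂ hA ∘ₗ B₁.subtype

theorem comp_eq_one_sub_exchangeEnd (hA : IsCompl A₁ A₂) (hB : IsCompl B₁ B₂) :
    (B₁.projectionOnto B₂ hB ∘ₗ A₂.subtype) ∘ₗ (A₂.projectionOnto A₁ hA.symm ∘ₗ B₁.subtype) =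
      1 - exchangeEnd hA hB := by
  refine LinearMap.ext fun x => ?_
  change B₁.projectionOnto B₂ hB (A₂.projection A₁ hA.symm x) = x - exchangeEnd hA hB x
  rw [projection_eq_self_sub_projection hA, map_sub, projectionOnto_apply_left]
  rfl

theorem disjoint_of_injective_exchangeEnd (hA : IsCompl A₁ A₂) (hB : IsCompl B₁ B₂)
    (hθ : Function.Injective (exchangeEnd hA hB)) : Disjoint B₁ A₂ := by
  refine disjoint_def.mpr fun x hxB hxA => ?_
  have hθx : exchangeEnd hA hB ⟨x, hxB⟩ = 0 := by
    simp [exchangeEnd, projection_apply_of_mem_right hA hxA]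
  simpa using congrArg Subtype.val (hθ (hθx.trans (map_zero _).symm))

theorem codisjoint_of_surjective_exchangeEnd (hA : IsCompl A₁ A₂) (hB : IsCompl B₁ B₂)
    (hθ : Function.Surjective (exchangeEnd hA hB)) : Codisjoint A₁ B₂ := by
  rw [codisjoint_iff, eq_top_iff, ← hB.sup_eq_top]
  refine sup_le (fun b hb => ?_) le_sup_right
  obtain ⟨x, hx⟩ := hθ ⟨b, hb⟩
  set a := A₁.projection A₂ hA x
  have hba : b = B₁.projection B₂ hB a := congrArg Subtype.val hx.symm
  rw [hba, eq_sub_of_add_eq (projection_add_projection_eq_self hB a)]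
  exact sub_mem (mem_sup_left (projection_apply_mem hA x))
    (mem_sup_right (projection_apply_mem _ a))

theorem bijective_exchangeEnd (hlen : IsFiniteLength R M) (hsat : IsSummandClosed S)
    (hA : IsCompl A₁ A₂) (hB : IsCompl B₁ B₂) (hA₂ : S A₂) (hB₁ : HasNoSummandIn S B₁) :
    Function.Bijective (exchangeEnd hA hB) :=
  have := (isFiniteLength_iff_isNoetherian_isArtinian.mp hlen).1
  have := (isFiniteLength_iff_isNoetherian_isArtinian.mp hlen).2
  bijective_of_one_sub_eq_comp hsat hA₂ (fun _ _ => hB₁.eq_bot_of_isCompl hsat) _ _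
    (comp_eq_one_sub_exchangeEnd hA hB)

end Exchange

theorem decS_max_swap_general
    {R : Type u} [Ring R] {M : Type v} [AddCommGroup M] [Module R M]
    (hlen : IsFiniteLength R M)
    (S : (D : Type v) → [AddCommGroup D] → [Module R D] → Prop)
    (hmul : ∀ (M' N D : Type v) [AddCommGroup M'] [Module R M'] [AddCommGroup N] [Module R N]
      [AddCommGroup D] [Module R D], Nonempty (M' ≃ₗ[R] N × D) → S N → S D → S M')
    (hsat : ∀ (M' D : Type v) [AddCommGroup M'] [Module R M'] [AddCommGroup D] [Module R D],
      S M' → (∃ (N : Type v) (_ : AddCommGroup N) (_ : Module R N),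
        Nonempty (M' ≃ₗ[R] D × N)) → S D)
    (A₁ A₂ B₁ B₂ : Submodule R M)
    (hA : DecSMax S (A₁, A₂)) (hB : DecSMax S (B₁, B₂)) :
    DecSMax S (A₁, B₂) ∧ DecSMax S (B₁, A₂) := by
  obtain ⟨hcA, hSA₂, hA₁⟩ := (decSMax_iff hmul hsat).mp hA
  obtain ⟨hcB, hSB₂, hB₁⟩ := (decSMax_iff hmul hsat).mp hB
  have hθA := bijective_exchangeEnd hlen hsat hcA hcB hSA₂ hB₁
  have hθB := bijective_exchangeEnd hlen hsat hcB hcA hSB₂ hA₁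
  have hA₁B₂ : IsCompl A₁ B₂ := ⟨disjoint_of_injective_exchangeEnd hcB hcA hθB.1,
    codisjoint_of_surjective_exchangeEnd hcA hcB hθA.2⟩
  have hB₁A₂ : IsCompl B₁ A₂ := ⟨disjoint_of_injective_exchangeEnd hcA hcB hθA.1,
    codisjoint_of_surjective_exchangeEnd hcB hcA hθB.2⟩
  exact ⟨(decSMax_iff hmul hsat).mpr ⟨hA₁B₂, hSB₂, hA₁⟩,
    (decSMax_iff hmul hsat).mpr ⟨hB₁A₂, hSA₂, hB₁⟩⟩

/-- Let `𝒮` be a saturated multiplicative class of `R`-modules, `M` an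
`R`-module of finite length, and `(A₁,A₂)`, `(B₁,B₂)` maximal elements of `Dec_𝒮(M)`.
Then `(A₁,B₂)` and `(B₁,A₂)` are maximal elements of `Dec_𝒮(M)`. -/
theorem decS_max_swap
    {R : Type u} [Ring R] {M : Type v} [AddCommGroup M] [Module R M]
    (hlen : IsFiniteLength R M)
    (S : (D : Type v) → [AddCommGroup D] → [Module R D] → Prop)
    (hzero : S PUnit)
    (hmul : ∀ (M' N D : Type v) [AddCommGroup M'] [Module R M'] [AddCommGroup N] [Module R N]
      [AddCommGroup D] [Module R D], Nonempty (M' ≃ₗ[R] N × D) → S N → S D → S M')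
    (hsat : ∀ (M' D : Type v) [AddCommGroup M'] [Module R M'] [AddCommGroup D] [Module R D],
      S M' → (∃ (N : Type v) (_ : AddCommGroup N) (_ : Module R N),
        Nonempty (M' ≃ₗ[R] D × N)) → S D)
    (A₁ A₂ B₁ B₂ : Submodule R M)
    (hA : DecSMax S (A₁, A₂)) (hB : DecSMax S (B₁, B₂)) :
    DecSMax S (A₁, B₂) ∧ DecSMax S (B₁, A₂) :=
  decS_max_swap_general hlen S hmul hsat A₁ A₂ B₁ B₂ hA hB
end

section
/- Let A be an order and G a finite abelian group. Then: (i) the set of nilpotent elements of the group ring A[G] equals nil(A)[G], the set of elements of A[G] all of whose coefficients are nilpotent in A; in particular A[G] is reduced if and only if A is reduced; (ii) the idempotents of A[G] are exactly the idempotents of A (embedded in A[G] via the identity element of G); in particular A[G] is connected if and only if A is connected. -/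
/-- A commutative ring is connected if it is non-zero and `0`, `1` are its only idempotents. -/
def IsConnectedRing (R : Type*) [CommRing R] : Prop :=
  Nontrivial R ∧ ∀ e : R, IsIdempotentElem e → e = 0 ∨ e = 1

open MonoidAlgebra

variable {A B : Type*} [CommRing A] [CommRing B] {G : Type*} [CommGroup G]

noncomputable def mapC (f : A →+* B) : MonoidAlgebra A G →+* MonoidAlgebra B G :=
  liftNCRingHom (singleOneRingHom.comp f) (of B G) (fun _ _ => Commute.all _ _)

lemma mapC_single (f : A →+* B) (a : G) (b : A) :
    mapC f (single a b) = single a (f b) := by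
  classical
  rw [mapC, liftNCRingHom]
  show liftNC _ _ (single a b) = _
  rw [liftNC_single]
  show (single (1:G) (f b) : MonoidAlgebra B G) * single a 1 = _
  rw [single_mul_single, one_mul, mul_one]

lemma mapC_apply (f : A →+* B) (x : MonoidAlgebra A G) (h : G) :
    (mapC f x).coeff h = f (x.coeff h) := by
  classical
  induction x using MonoidAlgebra.induction_linear with
  | zero => simp
  | add u v hu hv =>
      rw [map_add]
      show (mapC f u).coeff h + (mapC f v).coeff h = _
      show _ = f (u.coeff h + v.coeff h)
      rw [hu, hv, map_add]
  | single a b =>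
      rw [mapC_single]
      show Finsupp.single a (f b) h = f (Finsupp.single a b h)
      rw [Finsupp.single_apply, Finsupp.single_apply]
      split <;> simp

open LinearMap in
lemma trace_mulLeft [Fintype G] (x : MonoidAlgebra A G) :
    LinearMap.trace A (MonoidAlgebra A G) (LinearMap.mulLeft A x) =
      Fintype.card G • x.coeff 1 := by
  classical
  let b : Module.Basis G A (MonoidAlgebra A G) := MonoidAlgebra.basis G A
  rw [LinearMap.trace_eq_matrix_trace A b, Matrix.trace]
  have hdiag : ∀ g : G, (LinearMap.toMatrix b b (LinearMap.mulLeft A x)).diag g = x.coeff 1 := by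
    intro g
    rw [Matrix.diag, LinearMap.toMatrix_apply]
    show b.repr (x * single g 1) g = x.coeff 1
    have : b.repr (x * single g 1) = (x * single g 1).coeff := by
      rfl
    rw [this, coeff_mul_single_apply, mul_inv_cancel, mul_one]
  rw [Finset.sum_congr rfl (fun g _ => hdiag g), Finset.sum_const, Finset.card_univ]

lemma nilpotent_of_coeff_nilpotent (x : MonoidAlgebra A G)
    (h : ∀ g : G, IsNilpotent (x.coeff g)) : IsNilpotent x := by
  classical
  have hx : x = ∑ g ∈ x.coeff.support, MonoidAlgebra.single g (x.coeff g) := by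
    conv_lhs => rw [← sum_coeff_single x]
    rfl
  rw [hx]
  refine isNilpotent_sum fun g _ => ?_
  obtain ⟨k, hk⟩ := h g
  exact ⟨k, by rw [single_pow, hk]; exact MonoidAlgebra.single_zero _⟩

lemma coeff_nilpotent_of_nilpotent [Fintype G] [NoZeroSMulDivisors ℤ A]
    (x : MonoidAlgebra A G) (hx : IsNilpotent x) (g : G) : IsNilpotent (x.coeff g) := by
  classical
  haveI : Module.Free A (MonoidAlgebra A G) :=
    Module.Free.of_basis (MonoidAlgebra.basis G A)
  haveI : Module.Finite A (MonoidAlgebra A G) :=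
    Module.Finite.of_basis (MonoidAlgebra.basis G A)
  have key : IsNilpotent (LinearMap.trace A (MonoidAlgebra A G)
      (LinearMap.mulLeft A (x * single g⁻¹ 1))) := by
    apply LinearMap.isNilpotent_trace_of_isNilpotent
    obtain ⟨k, hk⟩ := hx
    exact ⟨k, by rw [LinearMap.pow_mulLeft, mul_pow, hk, zero_mul,
      LinearMap.mulLeft_zero_eq_zero]⟩
  rw [trace_mulLeft, coeff_mul_single_apply, one_mul, inv_inv, mul_one] at key
  obtain ⟨k, hk⟩ := key
  rw [smul_pow] at hk
  refine ⟨k, ?_⟩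
  have h2 : ((Fintype.card G ^ k : ℕ) : ℤ) • (x.coeff g) ^ k = 0 := by
    rw [natCast_zsmul]; exact hk
  rcases smul_eq_zero.mp h2 with h | h
  · exact absurd h (by positivity)
  · exact h

lemma field_case {K : Type*} [Field K] [CharZero K] [Fintype G]
    (x : MonoidAlgebra K G) (hx : IsIdempotentElem x)
    (hint : ∃ p : Polynomial ℤ, p.Monic ∧ Polynomial.eval₂ (Int.castRingHom K) (x.coeff 1) p = 0) :
    x = 0 ∨ x = 1 := by
  classical
  have hint' : IsIntegral ℤ (x.coeff 1) := by
    obtain ⟨p, hm, he⟩ := hint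
    exact ⟨p, hm, by rwa [algebraMap_int_eq]⟩
  clear hint
  haveI : Module.Finite K (MonoidAlgebra K G) :=
    Module.Finite.of_basis (MonoidAlgebra.basis G K)
  set f := LinearMap.mulLeft K x with hf
  have hproj : LinearMap.IsProj (LinearMap.range f) f := by
    refine ⟨fun y => LinearMap.mem_range_self f y, fun y hy => ?_⟩
    obtain ⟨z, rfl⟩ := hy
    show x * (x * z) = x * z
    rw [← mul_assoc, hx]
  set r := Module.finrank K (LinearMap.range f) with hr
  set n := Fintype.card G with hn
  have htr : (n : K) * x.coeff 1 = (r : K) := by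
    have h1 := hproj.trace
    rw [hf] at h1
    rw [trace_mulLeft] at h1
    rw [nsmul_eq_mul] at h1
    rw [h1]
  have hn0 : 0 < n := Fintype.card_pos
  have hfr : Module.finrank K (MonoidAlgebra K G) = n := by
    have h := Module.finrank_eq_card_basis
      (MonoidAlgebra.basis G K)
    exact h
  have hrn : r ≤ n := by
    have := Submodule.finrank_le (LinearMap.range f)
    rwa [hfr] at this
  set q : ℚ := (r : ℚ) / (n : ℚ) with hq
  have hx1 : x.coeff 1 = algebraMap ℚ K q := by
    rw [eq_ratCast (algebraMap ℚ K) q, hq]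
    push_cast
    rw [eq_div_iff (by exact_mod_cast hn0.ne' : (n : K) ≠ 0), mul_comm, htr]
  have hqint : IsIntegral ℤ q := by
    rw [hx1] at hint'
    exact (isIntegral_algebraMap_iff (algebraMap ℚ K).injective).mp hint'
  obtain ⟨z, hz⟩ := IsIntegrallyClosed.isIntegral_iff.mp hqint
  rw [eq_intCast] at hz
  have hq0 : 0 ≤ q := by positivity
  have hq1 : q ≤ 1 := by
    rw [hq, div_le_one (by exact_mod_cast hn0)]
    exact_mod_cast hrn
  have hz01 : z = 0 ∨ z = 1 := by
    rw [← hz] at hq0 hq1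
    have h0 : (0:ℤ) ≤ z := by exact_mod_cast hq0
    have h1 : z ≤ 1 := by exact_mod_cast hq1
    omega
  rcases hz01 with h | h
  · left
    have hq' : q = 0 := by rw [← hz, h]; simp
    have hr0 : r = 0 := by
      have : (r:ℚ) = 0 := by
        field_simp [hq'] at hq
        simpa [hq'] using hq.symm
      exact_mod_cast this
    have hbot : LinearMap.range f = ⊥ := by
      haveI : FiniteDimensional K (MonoidAlgebra K G) := ‹Module.Finite K _›
      exact Submodule.finrank_eq_zero.mp (hr.symm.trans hr0)
    have : x ∈ LinearMap.range f := ⟨1, by show x * 1 = x; rw [mul_one]⟩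
    rw [hbot] at this
    simpa using this
  · right
    have hq' : q = 1 := by rw [← hz, h]; simp
    have hrn' : r = n := by
      have : (r:ℚ) = (n:ℚ) := by
        rw [hq, div_eq_one_iff_eq (by exact_mod_cast hn0.ne')] at hq'
        exact hq'
      exact_mod_cast this
    have htop : LinearMap.range f = ⊤ := by
      apply Submodule.eq_top_of_finrank_eq
      rw [hfr, ← hrn']
    obtain ⟨y, hy⟩ : (1 : MonoidAlgebra K G) ∈ LinearMap.range f := by
      rw [htop]; trivial
    have hy' : x * y = 1 := hy
    calc x = x * (x * y) := by rw [hy', mul_one]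
    _ = (x * x) * y := by ring
    _ = x * y := by rw [hx]
    _ = 1 := hy'

lemma domain_case {B : Type*} [CommRing B] [IsDomain B] [CharZero B] [Fintype G]
    (y : MonoidAlgebra B G) (hy : IsIdempotentElem y)
    (hint : ∃ p : Polynomial ℤ, p.Monic ∧
      Polynomial.eval₂ (Int.castRingHom B) (y.coeff 1) p = 0)
    (g : G) (hg : g ≠ 1) : y.coeff g = 0 := by
  classical
  set K := FractionRing B
  haveI : CharZero K := charZero_of_injective_algebraMap (IsFractionRing.injective B K)
  set ι : B →+* K := algebraMap B K with hι
  set z : MonoidAlgebra K G := mapC ι y with hzdef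
  have hzidem : IsIdempotentElem z := by
    show z * z = z
    rw [hzdef, ← map_mul, hy]
  have hzint : ∃ p : Polynomial ℤ, p.Monic ∧
      Polynomial.eval₂ (Int.castRingHom K) (z.coeff 1) p = 0 := by
    obtain ⟨p, hm, he⟩ := hint
    refine ⟨p, hm, ?_⟩
    rw [hzdef, mapC_apply]
    have := Polynomial.hom_eval₂ p (Int.castRingHom B) ι (y.coeff 1)
    rw [he, map_zero] at this
    rw [RingHom.ext_int (Int.castRingHom K) (ι.comp (Int.castRingHom B))]
    exact this.symm
  have hz0 : z.coeff g = 0 := by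
    rcases field_case z hzidem hzint with h | h
    · rw [h]; rfl
    · rw [h]
      show (MonoidAlgebra.single (1 : G) (1 : K) : MonoidAlgebra K G).coeff g = 0
      exact Finsupp.single_eq_of_ne (fun hh => hg hh)
  rw [hzdef, mapC_apply] at hz0
  exact IsFractionRing.injective B K (by rw [hz0, map_zero])

section main
variable [Fintype G] [Module.Free ℤ A] [Module.Finite ℤ A]

lemma idem_coeff_nilpotent (x : MonoidAlgebra A G) (hx : IsIdempotentElem x)
    (g : G) (hg : g ≠ 1) : IsNilpotent (x.coeff g) := by
  classical
  rcases subsingleton_or_nontrivial A with hA | hA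
  · exact ⟨1, by rw [pow_one]; exact Subsingleton.elim _ _⟩
  haveI : NoZeroSMulDivisors ℤ A := by
    haveI : IsAddTorsionFree A := Module.isTorsionFree_int_iff_isAddTorsionFree.mp inferInstance
    infer_instance
  set S : Submonoid A := Submonoid.map (Int.castRingHom A).toMonoidHom (nonZeroDivisors ℤ)
    with hS
  have hSle : S ≤ nonZeroDivisors A := by
    rintro a ⟨n, hn, rfl⟩
    rw [mem_nonZeroDivisors_iff_right]
    intro b hb
    have hnz : n ≠ 0 := nonZeroDivisors.ne_zero hn
    have : n • b = 0 := by
      rw [zsmul_eq_mul]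
      show (n : A) * b = 0
      rw [mul_comm]
      exact hb
    rcases smul_eq_zero.mp this with h | h
    · exact absurd h hnz
    · exact h
  set Q := Localization S with hQ
  have hinj : Function.Injective (algebraMap A Q) := IsLocalization.injective Q hSle
  set φ := algebraMap A Q with hφ
  have hunit : ∀ n : ℤ, n ≠ 0 → IsUnit ((n : Q)) := by
    intro n hn
    have hmem : ((n : A)) ∈ S := ⟨n, mem_nonZeroDivisors_of_ne_zero hn, rfl⟩
    have := IsLocalization.map_units Q (⟨(n : A), hmem⟩ : S)
    simpa [map_intCast] using this
  -- integrality data for all coefficients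
  have hintA : ∀ h : G, ∃ p : Polynomial ℤ, p.Monic ∧
      Polynomial.eval₂ (Int.castRingHom A) (x.coeff h) p = 0 := by
    intro h
    haveI : Algebra.IsIntegral ℤ A := Algebra.IsIntegral.of_finite ℤ A
    obtain ⟨p, hm, he⟩ := Algebra.IsIntegral.isIntegral (R := ℤ) (x.coeff h)
    exact ⟨p, hm, by rwa [algebraMap_int_eq] at he⟩
  have key : ∀ q : Ideal Q, q.IsPrime → φ (x.coeff g) ∈ q := by
    intro q hq
    haveI : q.IsPrime := hq
    haveI : CharZero (Q ⧸ q) := by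
      refine ⟨fun m n h => ?_⟩
      by_contra hmn
      have hd : (m : ℤ) - (n : ℤ) ≠ 0 := sub_ne_zero.mpr (by exact_mod_cast hmn)
      have h0 : ((((m : ℤ) - (n : ℤ)) : ℤ) : Q ⧸ q) = 0 := by push_cast [h]; ring
      rw [← map_intCast (Ideal.Quotient.mk q), Ideal.Quotient.eq_zero_iff_mem] at h0
      exact hq.ne_top (q.eq_top_of_isUnit_mem h0 (hunit _ hd))
    set ψ : A →+* Q ⧸ q := (Ideal.Quotient.mk q).comp φ with hψ
    have hyidem : IsIdempotentElem (mapC ψ x (G := G)) := by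
      show _ * _ = _
      rw [← map_mul, hx]
    have hyint : ∃ p : Polynomial ℤ, p.Monic ∧
        Polynomial.eval₂ (Int.castRingHom (Q ⧸ q)) ((mapC ψ x (G := G)).coeff 1) p = 0 := by
      obtain ⟨p, hm, he⟩ := hintA 1
      refine ⟨p, hm, ?_⟩
      rw [mapC_apply]
      have h2 := Polynomial.hom_eval₂ p (Int.castRingHom A) ψ (x.coeff 1)
      rw [he, map_zero] at h2
      rw [RingHom.ext_int (Int.castRingHom (Q ⧸ q)) (ψ.comp (Int.castRingHom A))]
      exact h2.symm
    have h0 := domain_case (mapC ψ x) hyidem hyint g hg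
    rw [mapC_apply] at h0
    rwa [hψ, RingHom.comp_apply, Ideal.Quotient.eq_zero_iff_mem] at h0
  have hnil : IsNilpotent (φ (x.coeff g)) := nilpotent_iff_mem_prime.mpr key
  obtain ⟨k, hk⟩ := hnil
  exact ⟨k, hinj (by rw [map_pow, hk, map_zero])⟩

end main

section main2
variable [Fintype G] [Module.Free ℤ A] [Module.Finite ℤ A]

lemma single_one_coeff_nilpotent {c : A} (h : IsNilpotent (single (1 : G) c)) :
    IsNilpotent c := by
  obtain ⟨k, hk⟩ := h
  rw [single_pow, one_pow] at hk
  refine ⟨k, ?_⟩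
  have h1 : (single (1 : G) (c ^ k) : MonoidAlgebra A G).coeff 1 = (0 : MonoidAlgebra A G).coeff 1 := by
    rw [hk]
  rwa [coeff_single, Finsupp.single_eq_same] at h1

lemma idem_structure (x : MonoidAlgebra A G) (hx : IsIdempotentElem x) :
    ∃ e : A, IsIdempotentElem e ∧ x = single (1 : G) e := by
  classical
  set a := x.coeff 1 with ha
  set z : MonoidAlgebra A G := x - single (1 : G) a with hzdef
  have hznil : IsNilpotent z := by
    apply nilpotent_of_coeff_nilpotent
    intro h
    rcases eq_or_ne h 1 with rfl | hh
    · have : z.coeff 1 = 0 := by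
        rw [hzdef, coeff_sub, Finsupp.sub_apply, coeff_single, Finsupp.single_eq_same, ha, sub_self]
      rw [this]; exact IsNilpotent.zero
    · have : z.coeff h = x.coeff h := by
        rw [hzdef, coeff_sub, Finsupp.sub_apply, coeff_single, Finsupp.single_eq_of_ne (fun e => hh e), sub_zero]
      rw [this]
      exact idem_coeff_nilpotent x hx h hh
  have hsingle : single (1 : G) a = x - z := by rw [hzdef]; ring
  have hδ : IsNilpotent (a * a - a) := by
    apply single_one_coeff_nilpotent (G := G)
    have hexp : single (1 : G) (a * a - a)
        = z * z - 2 * (x * z) + z := by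
      have h1 : (single (1 : G) (a * a - a) : MonoidAlgebra A G)
          = single (1 : G) a * single (1 : G) a - single (1 : G) a := by
        rw [single_mul_single, one_mul]
        exact MonoidAlgebra.single_sub _ _ _
      rw [h1, hsingle]
      have hxx : x * x = x := hx
      ring_nf
      ring_nf at hxx
      rw [← sub_eq_zero]
      ring_nf
      rw [hxx]
      ring
    rw [hexp]
    have h2 : IsNilpotent (z * z) := (Commute.all z z).isNilpotent_mul_left hznil
    have h3 : IsNilpotent (2 * (x * z)) :=
      (Commute.all 2 (x*z)).isNilpotent_mul_left ((Commute.all x z).isNilpotent_mul_left hznil)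
    exact (Commute.all _ _).isNilpotent_add ((Commute.all _ _).isNilpotent_sub h2 h3) hznil
  set f := Ideal.Quotient.mk (nilradical A) with hfdef
  have hker : ∀ y ∈ RingHom.ker f, IsNilpotent y := by
    intro y hy
    rw [hfdef, Ideal.mk_ker] at hy
    exact mem_nilradical.mp hy
  have hidem : IsIdempotentElem (f a) := by
    show f a * f a = f a
    rw [← map_mul, ← sub_eq_zero, ← map_sub, hfdef, Ideal.Quotient.eq_zero_iff_mem]
    exact mem_nilradical.mpr hδ
  obtain ⟨e, he, hfe⟩ :=
    exists_isIdempotentElem_eq_of_ker_isNilpotent f hker (f a) ⟨a, rfl⟩ hidem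
  have hae : IsNilpotent (a - e) := by
    have h0 : f (a - e) = 0 := by rw [map_sub, hfe, sub_self]
    rw [hfdef, Ideal.Quotient.eq_zero_iff_mem] at h0
    exact mem_nilradical.mp h0
  have hyidem : IsIdempotentElem (single (1 : G) e) := by
    show _ * _ = _
    rw [single_mul_single, one_mul, he.eq]
  have hdiff : IsNilpotent (x - single (1 : G) e) := by
    apply nilpotent_of_coeff_nilpotent
    intro h
    rcases eq_or_ne h 1 with rfl | hh
    · have h1 : (x - single (1 : G) e).coeff 1 = a - e := by
        rw [coeff_sub, Finsupp.sub_apply, coeff_single, Finsupp.single_eq_same, ← ha]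
      rw [h1]; exact hae
    · have h1 : (x - single (1 : G) e).coeff h = x.coeff h := by
        rw [coeff_sub, Finsupp.sub_apply, coeff_single, Finsupp.single_eq_of_ne (fun e => hh e), sub_zero]
      rw [h1]
      exact idem_coeff_nilpotent x hx h hh
  exact ⟨e, he, eq_of_isNilpotent_sub_of_isIdempotentElem hx hyidem hdiff⟩

end main2

/-- Let `A` be an order and `G` a finite abelian group. Then
(i) the nilpotents of `A[G]` are the elements all of whose coefficients are nilpotent,
so `A[G]` is reduced iff `A` is; (ii) the idempotents of `A[G]` are exactly the idempotents
of `A` embedded via the identity element of `G`, so `A[G]` is connected iff `A` is. -/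
theorem groupring_nilpotents_and_idempotents
    {A : Type u} [CommRing A] [Module.Free ℤ A] [Module.Finite ℤ A]
    {G : Type v} [CommGroup G] [Finite G] :
    (∀ x : MonoidAlgebra A G, IsNilpotent x ↔ ∀ g : G, IsNilpotent (x.coeff g)) ∧
    (IsReduced (MonoidAlgebra A G) ↔ IsReduced A) ∧
    (∀ x : MonoidAlgebra A G, IsIdempotentElem x ↔
      ∃ e : A, IsIdempotentElem e ∧ x = MonoidAlgebra.single (1 : G) e) ∧
    (IsConnectedRing (MonoidAlgebra A G) ↔ IsConnectedRing A) := by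
  classical
  cases nonempty_fintype G
  haveI : NoZeroSMulDivisors ℤ A := by
    haveI : IsAddTorsionFree A := Module.isTorsionFree_int_iff_isAddTorsionFree.mp inferInstance
    infer_instance
  have part1 : ∀ x : MonoidAlgebra A G, IsNilpotent x ↔ ∀ g : G, IsNilpotent (x.coeff g) :=
    fun x => ⟨fun hx g => coeff_nilpotent_of_nilpotent x hx g,
      nilpotent_of_coeff_nilpotent x⟩
  have part3 : ∀ x : MonoidAlgebra A G, IsIdempotentElem x ↔
      ∃ e : A, IsIdempotentElem e ∧ x = MonoidAlgebra.single (1 : G) e := by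
    intro x
    constructor
    · exact idem_structure x
    · rintro ⟨e, he, rfl⟩
      show _ * _ = _
      rw [single_mul_single, one_mul, he.eq]
  refine ⟨part1, ?_, part3, ?_⟩
  · -- reduced iff
    constructor
    · intro hred
      refine ⟨fun a ha => ?_⟩
      have h1 : IsNilpotent (single (1 : G) a : MonoidAlgebra A G) := by
        obtain ⟨k, hk⟩ := ha
        exact ⟨k, by rw [single_pow, one_pow, hk]; exact MonoidAlgebra.single_zero _⟩
      have h2 := IsReduced.eq_zero _ h1
      have h3 : (single (1 : G) a : MonoidAlgebra A G).coeff 1 = (0 : MonoidAlgebra A G).coeff 1 := by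
        rw [h2]
      rwa [coeff_single, Finsupp.single_eq_same] at h3
    · intro hred
      refine ⟨fun x hx => ?_⟩
      have := (part1 x).mp hx
      exact MonoidAlgebra.ext (Finsupp.ext fun g => IsReduced.eq_zero _ (this g))
  · -- connected iff
    constructor
    · rintro ⟨hnt, hidem⟩
      constructor
      · by_contra h
        rw [not_nontrivial_iff_subsingleton] at h
        haveI : Subsingleton (MonoidAlgebra A G) :=
          ⟨fun u v => MonoidAlgebra.ext (Finsupp.ext fun g => Subsingleton.elim _ _)⟩
        exact not_subsingleton (MonoidAlgebra A G) this
      · intro e he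
        have hsi : IsIdempotentElem (single (1 : G) e : MonoidAlgebra A G) := by
          show _ * _ = _
          rw [single_mul_single, one_mul, he.eq]
        rcases hidem _ hsi with h | h
        · left
          have h3 : (single (1 : G) e : MonoidAlgebra A G).coeff 1 = (0 : MonoidAlgebra A G).coeff 1 := by
            rw [h]
          rwa [coeff_single, Finsupp.single_eq_same] at h3
        · right
          have h3 : (single (1 : G) e : MonoidAlgebra A G).coeff 1 = (1 : MonoidAlgebra A G).coeff 1 := by
            rw [h]
          rw [coeff_single, Finsupp.single_eq_same] at h3
          rw [h3, MonoidAlgebra.one_def, coeff_single, Finsupp.single_eq_same]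
    · rintro ⟨hnt, hidem⟩
      constructor
      · refine nontrivial_of_ne (0 : MonoidAlgebra A G) 1 fun h => ?_
        have h3 : (0 : MonoidAlgebra A G).coeff 1 = (1 : MonoidAlgebra A G).coeff 1 := by rw [h]
        rw [MonoidAlgebra.one_def, coeff_single, Finsupp.single_eq_same] at h3
        exact zero_ne_one h3
      · intro x hx
        obtain ⟨e, he, rfl⟩ := idem_structure x hx
        rcases hidem e he with h | h
        · left; rw [h]; exact MonoidAlgebra.single_zero _
        · right; rw [h, MonoidAlgebra.one_def]
end

section
/- Let R be a commutative ring and let (Δ, (R_δ)_{δ∈Δ}) be a universal grading of R. Then the abelian group Δ is generated by the set {δ ∈ Δ : R_δ ≠ 0}. -/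
/-- A grading of a commutative ring `R` by a (multiplicatively written) abelian group `Δ`:
a `Δ`-indexed internal direct sum decomposition of `R` into additive subgroups such that
`R_γ · R_δ ⊆ R_{γδ}`. -/
structure Grading (R : Type u) [CommRing R] (Δ : Type v) [CommGroup Δ] where
  comp : Δ → AddSubgroup R
  mul_mem : ∀ ⦃γ δ : Δ⦄ ⦃x y : R⦄, x ∈ comp γ → y ∈ comp δ → x * y ∈ comp (γ * δ)
  isInternal : letI := Classical.decEq Δ; DirectSum.IsInternal comp

/-- A grading is universal if every grading of `R` is obtained from it by pushforward
(`S_ε = Σ_{δ ∈ f⁻¹(ε)} R_δ`) along a unique group homomorphism. -/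
def Grading.IsUniversal {R : Type u} [CommRing R] {Δ : Type v} [CommGroup Δ]
    (g : Grading R Δ) : Prop :=
  ∀ (E : Type v) (_ : CommGroup E) (s : Grading R E),
    ∃! f : Δ →* E, ∀ ε : E, s.comp ε = ⨆ δ ∈ f ⁻¹' {ε}, g.comp δ

/-! The components `R_δ` vanish outside the subgroup `H` generated by the support, so the
grading restricts to an `H`-grading. Universality gives `f : Δ →* H` pushing the grading forward
to its restriction; followed by the inclusion `H ≤ Δ`, this is an endomorphism of `Δ` pushing the
grading forward to itself, hence the identity by uniqueness, and so `H = Δ`. -/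

theorem DirectSum.IsInternal.subtype_of_eq_bot {R M ι : Type*} [Ring R] [AddCommGroup M]
    [Module R M] [DecidableEq ι] {A : ι → Submodule R M} (h : IsInternal A) {s : Set ι}
    [DecidableEq s] (hs : ∀ i ∉ s, A i = ⊥) : IsInternal fun i : s => A i := by
  rw [isInternal_submodule_iff_iSupIndep_and_iSup_eq_top] at h ⊢
  refine ⟨h.1.comp Subtype.val_injective, eq_top_iff.mpr (h.2 ▸ iSup_le fun i => ?_)⟩
  by_cases hi : i ∈ s
  · exact le_iSup (fun j : s => A j) ⟨i, hi⟩
  · simp [hs i hi]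

namespace Grading

variable {R : Type u} [CommRing R] {Δ : Type v} [CommGroup Δ]

def IsPushforward {E : Type*} [CommGroup E] (g : Grading R Δ) (f : Δ →* E) (s : Grading R E) :
    Prop :=
  ∀ ε : E, s.comp ε = ⨆ δ ∈ f ⁻¹' {ε}, g.comp δ

theorem isPushforward_id (g : Grading R Δ) : g.IsPushforward (MonoidHom.id Δ) g := fun ε => by
  simp

theorem IsPushforward.comp {E F : Type*} [CommGroup E] [CommGroup F] {g : Grading R Δ}
    {s : Grading R E} {t : Grading R F} {f : Δ →* E} {f' : E →* F} (hf : g.IsPushforward f s)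
    (hf' : s.IsPushforward f' t) : g.IsPushforward (f'.comp f) t := fun φ => by
  rw [hf' φ]
  refine le_antisymm (iSup₂_le fun γ hγ => ?_) (iSup₂_le fun δ hδ => ?_)
  · rw [hf γ]
    exact iSup₂_le fun δ hδ => le_biSup g.comp (show f' (f δ) = φ from hδ ▸ hγ)
  · exact ((le_biSup g.comp (show δ ∈ f ⁻¹' {f δ} from rfl)).trans (hf (f δ)).ge).trans
      (le_biSup s.comp hδ)

theorem IsUniversal.eq_id {g : Grading R Δ} (hg : g.IsUniversal) {f : Δ →* Δ}
    (hf : g.IsPushforward f g) : f = MonoidHom.id Δ :=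
  (hg Δ inferInstance g).unique hf g.isPushforward_id

def restrict (g : Grading R Δ) (H : Subgroup Δ) (hH : ∀ δ ∉ H, g.comp δ = ⊥) : Grading R H where
  comp γ := g.comp γ
  mul_mem _ _ _ _ hx hy := g.mul_mem hx hy
  isInternal := by
    let := Classical.decEq Δ
    let := Classical.decEq H
    exact g.isInternal.subtype_of_eq_bot (A := fun δ => (g.comp δ).toIntSubmodule)
      fun δ hδ => by simp [hH δ hδ]

theorem isPushforward_restrict_subtype (g : Grading R Δ) (H : Subgroup Δ)
    (hH : ∀ δ ∉ H, g.comp δ = ⊥) : (g.restrict H hH).IsPushforward H.subtype g := fun δ => by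
  refine le_antisymm ?_ (iSup₂_le fun γ hγ => le_of_eq (congrArg g.comp hγ))
  by_cases hδ : δ ∈ H
  · exact le_biSup (g.restrict H hH).comp (i := ⟨δ, hδ⟩) rfl
  · simp [hH δ hδ]

end Grading

/-- If `(Δ, (R_δ))` is a universal grading of a commutative ring `R`, then
`Δ` is generated by `{δ : R_δ ≠ 0}`. -/
theorem universal_grading_generated_by_support
    {R : Type u} [CommRing R] {Δ : Type v} [CommGroup Δ]
    (g : Grading R Δ) (hg : g.IsUniversal) :
    Subgroup.closure {δ : Δ | g.comp δ ≠ ⊥} = ⊤ := by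
  set H := Subgroup.closure {δ : Δ | g.comp δ ≠ ⊥}
  have hH : ∀ δ ∉ H, g.comp δ = ⊥ := fun δ hδ => not_not.mp fun h => hδ (Subgroup.subset_closure h)
  obtain ⟨f, hf, -⟩ := hg H inferInstance (g.restrict H hH)
  have hid : H.subtype.comp f = MonoidHom.id Δ :=
    hg.eq_id (.comp hf (g.isPushforward_restrict_subtype H hH))
  refine eq_top_iff.mpr fun δ _ => ?_
  rw [← MonoidHom.id_apply Δ δ, ← hid]
  exact (f δ).2
end

section
/- Let R be a non-zero order. Then for each (A,G) ∈ GpRg(R) the group G is finite of order at most the rank of R as a ℤ-module, and the partially ordered set GpRg(R) contains a maximal element. -/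
/-- The natural ring homomorphism `A[G] → R` for a subring `A ⊆ R` and a subgroup `G ⊆ Rˣ`. -/
noncomputable def gpRgHom {R : Type*} [CommRing R] (A : Subring R) (G : Subgroup Rˣ) :
    MonoidAlgebra A G →+* R :=
  MonoidAlgebra.liftNCRingHom A.subtype ((Units.coeHom R).comp G.subtype)
    (fun _ _ => Commute.all _ _)

/-- `A[G] = R`: the natural map `A[G] → R` is a ring isomorphism. -/
def IsGpRg {R : Type*} [CommRing R] (A : Subring R) (G : Subgroup Rˣ) : Prop :=
  Function.Bijective (gpRgHom A G)

/-!
Injectivity of `A[G] → R` makes the elements of `G` linearly independent over `ℤ ⊆ A`, since `R`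
has characteristic zero; so `#G ≤ rank R`. Hence some `(A, G)` has `#G` as large as possible, and
it is maximal: for `(A, G) ≤ (B, H)` the inclusion `G ⊆ H` is an equality by counting, and then
`B ⊆ A` are two coefficient rings for the same `G`; writing `a ∈ A` in `B[G]` and comparing with
`a · 1` in `A[G]` shows `a ∈ B`.
-/

open MonoidAlgebra

section

variable {R : Type*} [CommRing R]

@[simp]
lemma gpRgHom_single (A : Subring R) (G : Subgroup Rˣ) (g : G) (a : A) :
    gpRgHom A G (single g a) = a * ((g : Rˣ) : R) := by
  simp [gpRgHom, liftNCRingHom]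

lemma gpRgHom_comp_mapRingHom_inclusion {A B : Subring R} (hBA : B ≤ A) (G : Subgroup Rˣ) :
    (gpRgHom A G).comp (mapRingHom G (Subring.inclusion hBA)) = gpRgHom B G :=
  ringHom_ext (fun b => by simp) (fun g => by simp)

lemma isGpRg_top_bot : IsGpRg (⊤ : Subring R) (⊥ : Subgroup Rˣ) := by
  let e := (uniqueRingEquiv (⊥ : Subgroup Rˣ)).trans (Subring.topEquiv (R := R))
  have he : gpRgHom ⊤ ⊥ = e.toRingHom :=
    ringHom_ext (fun a => by simp [e]) (fun g => by simp [e, Subsingleton.elim g 1])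
  rw [IsGpRg, he]
  exact e.bijective

lemma linearIndependent_of_injective_gpRgHom [CharZero R] {A : Subring R} {G : Subgroup Rˣ}
    (h : Function.Injective (gpRgHom A G)) :
    LinearIndependent ℤ (fun g : G => ((g : Rˣ) : R)) := by
  have hsingle := ((basis G A).linearIndependent.restrict_scalars' ℤ).map'
    (gpRgHom A G).toAddMonoidHom.toIntLinearMap (LinearMap.ker_eq_bot.mpr h)
  simpa [Function.comp_def] using hsingle

lemma eq_of_le_of_injective_gpRgHom_of_surjective_gpRgHom {A B : Subring R} {G : Subgroup Rˣ}
    (hA : Function.Injective (gpRgHom A G)) (hB : Function.Surjective (gpRgHom B G))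
    (hBA : B ≤ A) : B = A := by
  refine le_antisymm hBA fun a ha => ?_
  obtain ⟨f, hf⟩ := hB a
  have hmap : mapRingHom G (Subring.inclusion hBA) f = single 1 ⟨a, ha⟩ := hA <| by
    rw [← RingHom.comp_apply, gpRgHom_comp_mapRingHom_inclusion, hf, gpRgHom_single]
    simp
  have hcoeff : ((f.coeff 1 : B) : R) = a := by simpa using congr((($hmap).coeff 1 : R))
  exact hcoeff ▸ (f.coeff 1).2

variable [Nontrivial R] [Module.Free ℤ R]

lemma IsGpRg.linearIndependent {A : Subring R} {G : Subgroup Rˣ} (h : IsGpRg A G) :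
    LinearIndependent ℤ (fun g : G => ((g : Rˣ) : R)) :=
  have := Module.isTorsionFree_int_iff_isAddTorsionFree (M := R) |>.mp inferInstance
  have := CharZero.of_isAddTorsionFree R R
  linearIndependent_of_injective_gpRgHom h.1

variable [Module.Finite ℤ R]

lemma IsGpRg.finite {A : Subring R} {G : Subgroup Rˣ} (h : IsGpRg A G) : Finite G :=
  h.linearIndependent.finite_of_isNoetherian

lemma IsGpRg.natCard_le_finrank {A : Subring R} {G : Subgroup Rˣ} (h : IsGpRg A G) :
    Nat.card G ≤ Module.finrank ℤ R := by
  have := h.finite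
  have := Fintype.ofFinite G
  simpa only [Nat.card_eq_fintype_card] using h.linearIndependent.fintype_card_le_finrank

lemma exists_isGpRg_forall_natCard_le :
    ∃ (A : Subring R) (G : Subgroup Rˣ), IsGpRg A G ∧
      ∀ (B : Subring R) (H : Subgroup Rˣ), IsGpRg B H → Nat.card H ≤ Nat.card G := by
  let cards : Set ℕ := {n | ∃ (A : Subring R) (G : Subgroup Rˣ), IsGpRg A G ∧ Nat.card G = n}
  have hne : cards.Nonempty := ⟨_, ⊤, ⊥, isGpRg_top_bot, rfl⟩
  have hbdd : BddAbove cards := ⟨_, by rintro _ ⟨A, G, h, rfl⟩; exact h.natCard_le_finrank⟩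
  obtain ⟨A, G, hAG, hcard⟩ := Nat.sSup_mem hne hbdd
  exact ⟨A, G, hAG, fun B H h => hcard ▸ le_csSup hbdd ⟨B, H, h, rfl⟩⟩

end

/-- Let `R` be a non-zero order. Then for each `(A,G) ∈ GpRg(R)` the group
`G` is finite of order at most the rank of `R` as a `ℤ`-module, and `GpRg(R)` (ordered by
`(B,H) ≤ (A,G) ↔ H ⊆ G ∧ B ⊇ A`) contains a maximal element. -/
theorem gpRg_finite_and_maximal
    {R : Type u} [CommRing R] [Nontrivial R] [Module.Free ℤ R] [Module.Finite ℤ R] :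
    (∀ (A : Subring R) (G : Subgroup Rˣ), IsGpRg A G →
      Finite G ∧ Nat.card G ≤ Module.finrank ℤ R) ∧
    ∃ (A : Subring R) (G : Subgroup Rˣ), IsGpRg A G ∧
      ∀ (B : Subring R) (H : Subgroup Rˣ), IsGpRg B H → G ≤ H → B ≤ A → B = A ∧ H = G := by
  refine ⟨fun A G h => ⟨h.finite, h.natCard_le_finrank⟩, ?_⟩
  obtain ⟨A, G, hAG, hmax⟩ := exists_isGpRg_forall_natCard_le (R := R)
  refine ⟨A, G, hAG, fun B H hBH hGH hBA => ?_⟩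
  have := hBH.finite
  obtain rfl : G = H := Subgroup.eq_of_le_of_card_ge hGH (hmax B H hBH)
  exact ⟨eq_of_le_of_injective_gpRgHom_of_surjective_gpRgHom hAG.1 hBH.2 hBA, rfl⟩
end

section
/- Let R be a non-zero commutative ring and let (A,G) ∈ GpRg(R). If (A,G) is a maximal element of the partially ordered set GpRg(R), then A is stark. Conversely, if R is a connected order and A is stark, then (A,G) is a maximal element of GpRg(R). -/
/-- A commutative ring is stark if it is not isomorphic to any group ring `A[G]`
with `A` a ring and `G` a non-trivial group. -/
def IsStark (R : Type u) [CommRing R] : Prop :=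
  ∀ (A : Type u) (_ : Ring A) (G : Type u) (_ : Group G),
    Nontrivial G → IsEmpty (R ≃+* MonoidAlgebra A G)

/-!
If `A ≅ A'[G']` with `G' ≠ 1`, then `R = A[G] ≅ A'[G × G']`, and the images of `A'` and of
`G × G'` form a pair of `GpRg(R)` strictly above `(A, G)`.

Conversely, let `(B, H) ≥ (A, G)`. The augmentation `ε : R = A[G] → A` killing `G` maps
`R = B[H]` onto `A`, so `A` is a quotient of `B'[K]` with `B' = ε(B)` and `K = ε(H) ⊆ Aˣ`.
As `G` lies in the kernel, `|K| |G| ≤ |H|`, and comparing `ℤ`-ranks,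
`rk B' · |K| · |G| ≤ rk B · |H| = rk R = rk A · |G|`. So `B'[K] → A` is a surjection from a free
`ℤ`-module of rank at most `rk A`, hence an isomorphism. Starkness of `A` forces `K = 1`, so
`ε(B) = A`, which gives `B = A` since `ε` is the identity on `A`; then `|H| = |G|` by the rank
count.
-/

open Function MonoidAlgebra

theorem Subring.finite_int {R : Type*} [CommRing R] [Module.Finite ℤ R] (B : Subring R) :
    Module.Finite ℤ B :=
  .of_injective B.subtype.toAddMonoidHom.toIntLinearMap Subtype.val_injective

theorem Subring.free_int {R : Type*} [CommRing R] [Module.IsTorsionFree ℤ R] [Module.Finite ℤ R]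
    (B : Subring R) : Module.Free ℤ B :=
  have := B.finite_int
  have : Module.IsTorsionFree ℤ B := Subtype.val_injective.moduleIsTorsionFree _ fun _ _ => rfl
  inferInstance

theorem Subring.finrank_int_map_le {R S : Type*} [CommRing R] [CommRing S] (f : R →+* S)
    (B : Subring R) [Module.Finite ℤ B] :
    Module.finrank ℤ (B.map f) ≤ Module.finrank ℤ B := by
  let g : B →+* B.map f := (f.comp B.subtype).codRestrict _ fun b => ⟨b, b.2, rfl⟩
  refine LinearMap.finrank_le_finrank_of_surjective (f := g.toIntAlgHom.toLinearMap) ?_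
  rintro ⟨_, b, hb, rfl⟩
  exact ⟨⟨b, hb⟩, rfl⟩

theorem Subgroup.card_map_mul_card_le {M N : Type*} [Group M] [Group N] (f : M →* N)
    {H K : Subgroup M} [Finite H] (hKH : K ≤ H) (hK : K ≤ f.ker) :
    Nat.card (H.map f) * Nat.card K ≤ Nat.card H := by
  rw [← (f.domRestrict H).ker.card_mul_index, Subgroup.index_ker, MonoidHom.domRestrict_range,
    MonoidHom.ker_domRestrict, mul_comm, ← Nat.card_congr (subgroupOfEquivOfLe hKH).toEquiv]
  exact Nat.mul_le_mul_right _ (Subgroup.card_le_of_le (subgroupOf_mono H hK))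

section GpRg

variable {R : Type*} [CommRing R] {B : Subring R} {H : Subgroup Rˣ}

theorem gpRgHom_single_s13 (h : H) (b : B) :
    gpRgHom B H (single h b) = b * ((h : Rˣ) : R) :=
  liftNC_single _ _ _ _

theorem gpRgHom_eq_lift :
    gpRgHom B H = (lift B R H ((Units.coeHom R).comp H.subtype)).toRingHom :=
  ringHom_ext
    (fun b => by
      simp only [gpRgHom_single_s13, OneMemClass.coe_one, Units.val_one, mul_one,
        AlgHom.toRingHom_eq_coe, RingHom.coe_coe, lift_single, map_one, Algebra.smul_def]
      rfl)
    (fun h => by simp [gpRgHom_single_s13])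

theorem gpRgHom_map_surjective {S : Type*} [CommRing S] (hs : Surjective (gpRgHom B H))
    (f : R →+* S) (hf : Surjective f) :
    Surjective (gpRgHom (B.map f) (H.map (Units.map f.toMonoidHom))) := by
  let fB : B →+* B.map f := (f.comp B.subtype).codRestrict _ fun b => ⟨b, b.2, rfl⟩
  let fH : H →* H.map (Units.map f.toMonoidHom) := (Units.map f.toMonoidHom).subgroupMap H
  have hcomm : (gpRgHom _ _).comp ((mapDomainRingHom _ fH).comp (mapRingHom H fB)) =
      f.comp (gpRgHom B H) :=
    ringHom_ext
      (fun b => by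
        simp only [RingHom.comp_apply, mapRingHom_single, mapDomainRingHom_apply, mapDomain_single,
          gpRgHom_single_s13, map_one, OneMemClass.coe_one, Units.val_one, mul_one]
        rfl)
      (fun h => by
        simp only [RingHom.comp_apply, mapRingHom_single, mapDomainRingHom_apply, mapDomain_single,
          gpRgHom_single_s13, map_one, OneMemClass.coe_one, one_mul]
        rfl)
  have : Surjective (f.comp (gpRgHom B H)) := hf.comp hs
  rw [← hcomm, RingHom.coe_comp] at this
  exact this.of_comp

theorem eq_top_of_gpRgHom_bot_surjective (hs : Surjective (gpRgHom B ⊥)) : B = ⊤ := by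
  rw [eq_top_iff]
  rintro r -
  obtain ⟨x, rfl⟩ := hs r
  induction x using MonoidAlgebra.induction_linear with
  | zero => simp
  | add x y hx hy => simpa using add_mem hx hy
  | single h b => simp [gpRgHom_single_s13, Subgroup.mem_bot.1 h.2]

section Rank

variable [Module.Free ℤ R] [Module.Finite ℤ R]

theorem finrank_int_monoidAlgebra [Finite H] :
    Module.finrank ℤ (MonoidAlgebra B H) = Module.finrank ℤ B * Nat.card H := by
  have := B.free_int
  have := B.finite_int
  have := Fintype.ofFinite H
  rw [(coeffLinearEquiv ℤ).finrank_eq, Module.finrank_finsupp, Nat.card_eq_fintype_card, mul_comm]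

theorem isGpRg_of_gpRgHom_surjective [Finite H] (hs : Surjective (gpRgHom B H))
    (hrank : Module.finrank ℤ B * Nat.card H ≤ Module.finrank ℤ R) : IsGpRg B H := by
  have := B.finite_int
  have := B.free_int
  have : Module.Finite ℤ (MonoidAlgebra B H) := .equiv (coeffLinearEquiv ℤ).symm
  have : Module.Free ℤ (MonoidAlgebra B H) := .of_equiv (coeffLinearEquiv ℤ).symm
  rw [← finrank_int_monoidAlgebra] at hrank
  exact OrzechProperty.bijective_of_surjective_of_finrank_le
    (gpRgHom B H).toIntAlgHom.toLinearMap hs hrank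

end Rank

namespace IsGpRg

noncomputable def basis (hBH : IsGpRg B H) : Module.Basis H B R :=
  .ofRepr <| (LinearEquiv.ofBijective (lift B R H ((Units.coeHom R).comp H.subtype)).toLinearMap
    (by simpa [IsGpRg, gpRgHom_eq_lift] using hBH)).symm ≪≫ₗ coeffLinearEquiv B

@[simp]
theorem basis_apply (hBH : IsGpRg B H) (h : H) : hBH.basis h = ((h : Rˣ) : R) := by
  simp [basis]

theorem eq_one_of_coe_mem [Nontrivial R] (hBH : IsGpRg B H) {h : H} (hh : ((h : Rˣ) : R) ∈ B) :
    h = 1 := by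
  have key : hBH.basis h = (⟨_, hh⟩ : B) • hBH.basis 1 := by
    simp only [basis_apply, OneMemClass.coe_one, Units.val_one, Algebra.smul_def, mul_one]
    rfl
  have := congrArg hBH.basis.repr key
  simp only [Module.Basis.repr_self, map_smul, Finsupp.smul_single, smul_eq_mul, mul_one] at this
  exact (Finsupp.single_eq_single_iff _ _ _ _).mp this |>.resolve_right (by simp) |>.1

theorem finite_s13 [Nontrivial R] [Module.Finite ℤ R] (hBH : IsGpRg B H) : Finite H :=
  have : Module.Finite B R := .of_restrictScalars_finite ℤ B R
  Module.Finite.finite_basis hBH.basis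

theorem finrank_eq [Nontrivial R] [Module.Free ℤ R] [Module.Finite ℤ R] (hBH : IsGpRg B H) :
    Module.finrank ℤ R = Module.finrank ℤ B * Nat.card H := by
  have := B.free_int
  have := hBH.finite_s13
  have : Module.Free B R := .of_basis hBH.basis
  rw [← Module.finrank_mul_finrank ℤ B R, Module.finrank_eq_nat_card_basis hBH.basis]

theorem eq_of_le [Nontrivial R] [Module.Free ℤ R] [Module.Finite ℤ R] {G : Subgroup Rˣ}
    (hBG : IsGpRg B G) (hBH : IsGpRg B H) (hGH : G ≤ H) : G = H := by
  have := B.free_int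
  have := B.finite_int
  have := hBH.finite_s13
  refine Subgroup.eq_of_le_of_card_ge hGH
    (Nat.le_of_mul_le_mul_left ?_ (Module.finrank_pos (R := ℤ) (M := B)))
  rw [← hBG.finrank_eq, ← hBH.finrank_eq]

noncomputable def augmentation (hBH : IsGpRg B H) : R →+* B :=
  (lift B B H 1).toRingHom.comp (RingEquiv.ofBijective _ hBH).symm.toRingHom

theorem augmentation_mul (hBH : IsGpRg B H) (b : B) (h : H) :
    hBH.augmentation (b * ((h : Rˣ) : R)) = b := by
  rw [augmentation, RingHom.comp_apply, ← gpRgHom_single_s13, RingEquiv.toRingHom_eq_coe,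
    RingEquiv.coe_toRingHom, ← RingEquiv.ofBijective_apply _ hBH, RingEquiv.symm_apply_apply]
  simp

theorem augmentation_coe (hBH : IsGpRg B H) (b : B) : hBH.augmentation b = b := by
  simpa using hBH.augmentation_mul b 1

theorem augmentation_units (hBH : IsGpRg B H) (h : H) :
    hBH.augmentation ((h : Rˣ) : R) = 1 := by
  simpa using hBH.augmentation_mul 1 h

theorem le_of_map_augmentation_eq_top (hBH : IsGpRg B H) {C : Subring R} (hCB : C ≤ B)
    (hC : C.map hBH.augmentation = ⊤) : B ≤ C := fun b hb => by
  obtain ⟨c, hc, hcb⟩ := hC.ge (Subring.mem_top ⟨b, hb⟩)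
  have : (⟨b, hb⟩ : B) = ⟨c, hCB hc⟩ := hcb.symm.trans (hBH.augmentation_coe ⟨c, hCB hc⟩)
  rwa [show b = c from congrArg Subtype.val this]

end IsGpRg

end GpRg

noncomputable section GroupRingEquiv

variable {S k Γ : Type*} [CommRing S] [Ring k] [Group Γ]

def RingEquiv.coeffSubring (e : MonoidAlgebra k Γ ≃+* S) : Subring S :=
  (e.toRingHom.comp singleOneRingHom).range

def RingEquiv.groupUnits (e : MonoidAlgebra k Γ ≃+* S) : Γ →* Sˣ :=
  (Units.map e.toMonoidHom).comp (of k Γ).toHomUnits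

@[simp]
theorem RingEquiv.coe_groupUnits (e : MonoidAlgebra k Γ ≃+* S) (g : Γ) :
    (e.groupUnits g : S) = e (single g 1) :=
  rfl

theorem RingEquiv.groupUnits_injective [Nontrivial k] (e : MonoidAlgebra k Γ ≃+* S) :
    Injective e.groupUnits := fun _ _ h =>
  of_injective (e.injective (congrArg Units.val h))

theorem RingEquiv.isGpRg [Nontrivial k] (e : MonoidAlgebra k Γ ≃+* S) :
    IsGpRg e.coeffSubring e.groupUnits.range := by
  let c : k ≃+* e.coeffSubring := .ofBijective (e.toRingHom.comp singleOneRingHom).rangeRestrict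
    ⟨fun a b h => single_right_injective (e.injective (congrArg Subtype.val h)),
      RingHom.rangeRestrict_surjective _⟩
  let Φ : MonoidAlgebra k Γ ≃+* MonoidAlgebra e.coeffSubring e.groupUnits.range :=
    (mapRingEquiv Γ c).trans (mapDomainRingEquiv _ (MonoidHom.ofInjective e.groupUnits_injective))
  have hΦ : (gpRgHom _ _).comp Φ.toRingHom = e.toRingHom :=
    ringHom_ext
      (fun a => by
        simp only [Φ, RingEquiv.toRingHom_eq_coe, RingEquiv.coe_ringHom_trans, RingHom.coe_comp,
          RingHom.coe_coe, comp_apply, mapRingEquiv_single, mapDomainRingEquiv_single, map_one,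
          gpRgHom_single_s13, OneMemClass.coe_one, Units.val_one, mul_one]
        rfl)
      (fun g => by
        simp only [Φ, RingEquiv.toRingHom_eq_coe, RingEquiv.coe_ringHom_trans, RingHom.coe_coe,
          RingHom.coe_comp, comp_apply, mapRingEquiv_single, map_one, mapDomainRingEquiv_single,
          gpRgHom_single_s13, OneMemClass.coe_one, one_mul]
        rfl)
  have : ⇑(gpRgHom e.coeffSubring e.groupUnits.range) = e ∘ Φ.symm := by
    ext x; simpa using congr($hΦ (Φ.symm x))
  rw [IsGpRg, this]
  exact e.bijective.comp Φ.symm.bijective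

end GroupRingEquiv

def IsMaximalGpRg {R : Type*} [CommRing R] (A : Subring R) (G : Subgroup Rˣ) : Prop :=
  ∀ (B : Subring R) (H : Subgroup Rˣ), IsGpRg B H → G ≤ H → B ≤ A → B = A ∧ H = G

theorem IsGpRg.isStark_of_isMaximalGpRg {R : Type u} [CommRing R] [Nontrivial R]
    {A : Subring R} {G : Subgroup Rˣ} (hAG : IsGpRg A G) (hmax : IsMaximalGpRg A G) :
    IsStark A := by
  intro A' _ G' _ _
  refine ⟨fun ψ => ?_⟩
  have : Nontrivial A' := by
    by_contra h
    rw [not_nontrivial_iff_subsingleton] at h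
    exact not_subsingleton A ψ.toEquiv.subsingleton
  let e : MonoidAlgebra A' (G × G') ≃+* R :=
    curryRingEquiv.trans ((mapRingEquiv G ψ.symm).trans (.ofBijective _ hAG))
  have he (g : G) (g' : G') (a : A') :
      e (single (g, g') a) = ψ.symm (single g' a) * ((g : Rˣ) : R) := by
    simp only [e, RingEquiv.trans_apply, curryRingEquiv_single, mapRingEquiv_single]
    exact gpRgHom_single_s13 _ _
  have hC : e.coeffSubring ≤ A := by
    rintro _ ⟨a, rfl⟩
    simp [he]
  have hG : G ≤ e.groupUnits.range := fun g hg => ⟨(⟨g, hg⟩, 1), by ext; simp [he, ← one_def]⟩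
  obtain ⟨-, hH⟩ := hmax _ _ e.isGpRg hG hC
  obtain ⟨g', hg'⟩ := exists_ne (1 : G')
  have hmem : e.groupUnits (1, g') ∈ G := hH.le ⟨_, rfl⟩
  have hval : (e.groupUnits (1, g') : R) ∈ A := by simp [he]
  have h1 : e.groupUnits (1, g') = 1 :=
    congrArg Subtype.val (hAG.eq_one_of_coe_mem (h := ⟨_, hmem⟩) hval)
  rw [← map_one e.groupUnits] at h1
  exact hg' (congrArg Prod.snd (e.groupUnits_injective h1))

theorem IsGpRg.isMaximalGpRg_of_isStark {R : Type u} [CommRing R] [Nontrivial R]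
    [Module.Free ℤ R] [Module.Finite ℤ R] {A : Subring R} {G : Subgroup Rˣ} (hAG : IsGpRg A G)
    (hA : IsStark A) : IsMaximalGpRg A G := by
  intro B H hBH hGH hBA
  have := hAG.finite_s13
  have := hBH.finite_s13
  have := A.free_int
  have := A.finite_int
  have := B.finite_int
  let ε := hAG.augmentation
  let K := H.map (Units.map ε.toMonoidHom)
  have : Finite K := .of_surjective _ ((Units.map ε.toMonoidHom).subgroupMap_surjective H)
  have hs : Surjective (gpRgHom (B.map ε) K) :=
    gpRgHom_map_surjective hBH.2 ε fun a => ⟨a, hAG.augmentation_coe a⟩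
  have hK : Nat.card K * Nat.card G ≤ Nat.card H :=
    Subgroup.card_map_mul_card_le _ hGH fun g hg => Units.ext (hAG.augmentation_units ⟨g, hg⟩)
  have hrank : Module.finrank ℤ (B.map ε) * Nat.card K ≤ Module.finrank ℤ A := by
    refine Nat.le_of_mul_le_mul_right ?_ (Nat.card_pos (α := G))
    calc Module.finrank ℤ (B.map ε) * Nat.card K * Nat.card G
        ≤ Module.finrank ℤ B * (Nat.card K * Nat.card G) := by
          rw [mul_assoc]; exact Nat.mul_le_mul_right _ (B.finrank_int_map_le ε)
      _ ≤ Module.finrank ℤ B * Nat.card H := Nat.mul_le_mul_left _ hK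
      _ = Module.finrank ℤ A * Nat.card G := by rw [← hAG.finrank_eq, ← hBH.finrank_eq]
  have hBK : IsGpRg (B.map ε) K := isGpRg_of_gpRgHom_surjective hs hrank
  have hK_bot : K = ⊥ := by
    by_contra hne
    have := (Subgroup.nontrivial_iff_ne_bot K).2 hne
    exact (hA _ _ _ _ this).false (RingEquiv.ofBijective _ hBK).symm
  have hAB : A ≤ B :=
    hAG.le_of_map_augmentation_eq_top hBA (eq_top_of_gpRgHom_bot_surjective (hK_bot ▸ hs))
  obtain rfl := le_antisymm hBA hAB
  exact ⟨rfl, (hAG.eq_of_le hBH hGH).symm⟩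

/-- Let `R` be a non-zero commutative ring and `(A,G) ∈ GpRg(R)`.
If `(A,G)` is maximal in `GpRg(R)`, then `A` is stark; conversely, if `R` is a connected
order and `A` is stark, then `(A,G)` is maximal in `GpRg(R)`. -/
theorem maximal_iff_stark
    {R : Type u} [CommRing R] [Nontrivial R]
    (A : Subring R) (G : Subgroup Rˣ) (hAG : IsGpRg A G) :
    ((∀ (B : Subring R) (H : Subgroup Rˣ), IsGpRg B H → G ≤ H → B ≤ A → B = A ∧ H = G) →
      IsStark A) ∧
    (IsConnectedRing R → Module.Free ℤ R → Module.Finite ℤ R → IsStark A →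
      ∀ (B : Subring R) (H : Subgroup Rˣ), IsGpRg B H → G ≤ H → B ≤ A → B = A ∧ H = G) :=
  ⟨hAG.isStark_of_isMaximalGpRg, fun _ _ _ hA => hAG.isMaximalGpRg_of_isStark hA⟩
end

section
/- Let A be a connected reduced order with universal grading (Γ, (A_γ)_{γ∈Γ}) and degree map d: μ(A) → Γ. Then the following are equivalent: (i) A is stark; (ii) the only group homomorphism f: Γ → μ(A) with f∘d∘f = f is the zero homomorphism; (iii) for every group homomorphism f: Γ → μ(A), the endomorphism d∘f of Γ is nilpotent. -/
universe u v

open DirectSum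

theorem iSupIndep.biSup_fiber {α ι κ : Type*} [CompleteLattice α] [IsModularLattice α]
    [IsCompactlyGenerated α] {N : ι → α} (hN : iSupIndep N) (f : ι → κ) :
    iSupIndep fun k => ⨆ i ∈ f ⁻¹' {k}, N i := by
  intro k
  refine (hN.disjoint_biSup_biSup (t := {i | f i ≠ k})
    (Set.disjoint_left.mpr fun i hi hi' => hi' hi)).mono_right ?_
  exact iSup₂_le fun k' hk' => iSup₂_le fun i hi =>
    le_biSup N (show f i ≠ k from (Set.mem_singleton_iff.mp hi) ▸ hk')

theorem iSup_biSup_fiber {α ι κ : Type*} [CompleteLattice α] (N : ι → α) (f : ι → κ) :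
    ⨆ k, ⨆ i ∈ f ⁻¹' {k}, N i = ⨆ i, N i :=
  le_antisymm (iSup_le fun _ => iSup₂_le fun i _ => le_iSup N i)
    (iSup_le fun i => le_iSup_of_le (f i) (le_biSup N rfl))

namespace Grading

variable {R : Type u} [CommRing R] {Δ : Type v} [CommGroup Δ]

-- As ℤ-submodules the components live in a modular, compactly generated lattice.
def submodule (g : Grading R Δ) (δ : Δ) : Submodule ℤ R := (g.comp δ).toIntSubmodule

@[simp]
theorem mem_submodule {g : Grading R Δ} {δ : Δ} {x : R} : x ∈ g.submodule δ ↔ x ∈ g.comp δ :=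
  Iff.rfl

theorem isInternal_submodule (g : Grading R Δ) :
    letI := Classical.decEq Δ; IsInternal g.submodule :=
  g.isInternal

theorem iSupIndep_submodule (g : Grading R Δ) : iSupIndep g.submodule :=
  letI := Classical.decEq Δ; g.isInternal_submodule.submodule_iSupIndep

theorem iSup_submodule_eq_top (g : Grading R Δ) : ⨆ δ, g.submodule δ = ⊤ :=
  letI := Classical.decEq Δ; g.isInternal_submodule.submodule_iSup_eq_top

def ofIntSubmodule (M : Δ → Submodule ℤ R)
    (mul_mem : ∀ ⦃γ δ : Δ⦄ ⦃x y : R⦄, x ∈ M γ → y ∈ M δ → x * y ∈ M (γ * δ))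
    (hind : iSupIndep M) (htop : ⨆ δ, M δ = ⊤) : Grading R Δ where
  comp δ := (M δ).toAddSubgroup
  mul_mem := mul_mem
  isInternal := letI := Classical.decEq Δ;
    isInternal_submodule_of_iSupIndep_of_iSup_eq_top hind htop

theorem eq_of_mem_of_mem (g : Grading R Δ) {x : R} (hx : x ≠ 0) {γ δ : Δ}
    (hγ : x ∈ g.comp γ) (hδ : x ∈ g.comp δ) : γ = δ := by
  by_contra hne
  exact hx (Submodule.disjoint_def.mp (g.iSupIndep_submodule.pairwiseDisjoint hne) x hγ hδ)

theorem finite_setOf_comp_ne_bot [Module.Finite ℤ R] (g : Grading R Δ) :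
    {δ | g.comp δ ≠ ⊥}.Finite := by
  simpa [submodule] using Submodule.finite_ne_bot_of_iSupIndep g.iSupIndep_submodule

theorem one_mem (g : Grading R Δ) : (1 : R) ∈ g.comp 1 := by
  obtain ⟨e, he, r, hr, hsum⟩ := Submodule.mem_sup.mp <|
    (iSup_split_single g.submodule 1 ▸ g.iSup_submodule_eq_top) ▸ Submodule.mem_top (x := (1 : R))
  -- For `x ∈ R_γ`, `x * r = x - x * e` lies in `R_γ` and in the other components, so vanishes.
  have hhom : ∀ γ, ∀ x ∈ g.submodule γ, x * r = 0 := by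
    intro γ x hx
    have hout : x * r ∈ ⨆ (η) (_ : η ≠ γ), g.submodule η := by
      have hle : ⨆ (δ) (_ : δ ≠ 1), g.submodule δ ≤
          (⨆ (η) (_ : η ≠ γ), g.submodule η).comap (LinearMap.mulLeft ℤ x) :=
        iSup₂_le fun δ hδ y hy => Submodule.mem_iSup_of_mem (γ * δ) <|
          Submodule.mem_iSup_of_mem (by simpa using hδ) (g.mul_mem hx hy)
      exact hle hr
    have hin : x * r ∈ g.submodule γ := by
      rw [show x * r = x - x * e by linear_combination x * hsum]
      exact sub_mem hx (by simpa using g.mul_mem hx he)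
    exact Submodule.disjoint_def.mp (g.iSupIndep_submodule γ) _ hin hout
  have hr0 : r = 0 := by
    have : ⨆ δ, g.submodule δ ≤ LinearMap.ker (LinearMap.mulRight ℤ r) :=
      iSup_le fun γ x hx => hhom γ x hx
    have h1 := this (g.iSup_submodule_eq_top ▸ Submodule.mem_top (x := (1 : R)))
    rwa [LinearMap.mem_ker, LinearMap.mulRight_apply, one_mul] at h1
  rw [← hsum, hr0, add_zero]
  exact he

theorem mul_mem_biSup_fiber (g : Grading R Δ) {E : Type*} [CommGroup E] (f : Δ →* E)
    {ε₁ ε₂ : E} {x y : R} (hx : x ∈ ⨆ δ ∈ f ⁻¹' {ε₁}, g.submodule δ)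
    (hy : y ∈ ⨆ δ ∈ f ⁻¹' {ε₂}, g.submodule δ) :
    x * y ∈ ⨆ δ ∈ f ⁻¹' {ε₁ * ε₂}, g.submodule δ := by
  have hhom : ∀ δ ∈ f ⁻¹' {ε₁}, ∀ x ∈ g.submodule δ,
      x * y ∈ ⨆ δ ∈ f ⁻¹' {ε₁ * ε₂}, g.submodule δ := by
    intro δ hδ x hx
    have hle : ⨆ δ' ∈ f ⁻¹' {ε₂}, g.submodule δ' ≤
        (⨆ δ ∈ f ⁻¹' {ε₁ * ε₂}, g.submodule δ).comap (LinearMap.mulLeft ℤ x) :=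
      iSup₂_le fun δ' hδ' z hz => Submodule.mem_iSup_of_mem (δ * δ') <|
        Submodule.mem_iSup_of_mem (by simp_all) (g.mul_mem hx hz)
    exact hle hy
  have hle : ⨆ δ ∈ f ⁻¹' {ε₁}, g.submodule δ ≤
      (⨆ δ ∈ f ⁻¹' {ε₁ * ε₂}, g.submodule δ).comap (LinearMap.mulRight ℤ y) :=
    iSup₂_le hhom
  exact hle hx

def map (g : Grading R Δ) {E : Type*} [CommGroup E] (f : Δ →* E) : Grading R E :=
  ofIntSubmodule (fun ε => ⨆ δ ∈ f ⁻¹' {ε}, g.submodule δ)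
    (fun _ _ _ _ => g.mul_mem_biSup_fiber f)
    (g.iSupIndep_submodule.biSup_fiber f)
    (by rw [iSup_biSup_fiber, g.iSup_submodule_eq_top])

theorem mem_map_comp {g : Grading R Δ} {E : Type*} [CommGroup E] (f : Δ →* E) {x : R} {δ : Δ}
    (hx : x ∈ g.comp δ) : x ∈ (g.map f).comp (f δ) :=
  Submodule.mem_iSup_of_mem δ (Submodule.mem_iSup_of_mem rfl hx)

def oneSubring (g : Grading R Δ) : Subring R where
  carrier := g.comp 1
  zero_mem' := zero_mem _
  add_mem' := add_mem
  neg_mem' := neg_mem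
  one_mem' := g.one_mem
  mul_mem' hx hy := by simpa using g.mul_mem hx hy

section Units

variable (g : Grading R Δ) (u : Δ →* Rˣ)

theorem lift_injective (hu : ∀ δ, (u δ : R) ∈ g.comp δ) :
    Function.Injective (MonoidAlgebra.lift g.oneSubring R Δ ((Units.coeHom R).comp u)) := by
  rw [injective_iff_map_eq_zero]
  intro x hx
  rw [MonoidAlgebra.lift_apply', Finsupp.sum] at hx
  have hzero := (iSupIndep_iff_finsetSum_eq_zero_imp_eq_zero g.submodule).mp
    g.iSupIndep_submodule x.coeff.support _
    (fun δ _ => by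
      simpa [Algebra.algebraMap_ofSubsemiring_apply] using g.mul_mem (x.coeff δ).2 (hu δ)) hx
  ext δ
  by_cases hδ : δ ∈ x.coeff.support
  · have := hzero δ hδ
    simp only [MonoidHom.coe_comp, Units.coeHom_apply, Function.comp_apply,
      Units.mul_left_eq_zero] at this
    simpa using this
  · simpa using hδ

theorem lift_surjective (hu : ∀ δ, (u δ : R) ∈ g.comp δ) :
    Function.Surjective (MonoidAlgebra.lift g.oneSubring R Δ ((Units.coeHom R).comp u)) := by
  set L := MonoidAlgebra.lift g.oneSubring R Δ ((Units.coeHom R).comp u)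
  have hle : ⨆ δ, g.submodule δ ≤ LinearMap.range L.toRingHom.toAddMonoidHom.toIntLinearMap := by
    refine iSup_le fun δ x hx => ⟨MonoidAlgebra.single δ ⟨x * ↑(u δ)⁻¹, ?_⟩, ?_⟩
    · show _ ∈ g.comp 1
      simpa using g.mul_mem hx (hu δ⁻¹)
    · simp [L, MonoidAlgebra.lift_single, Subring.smul_def]
  intro x
  exact hle (g.iSup_submodule_eq_top ▸ Submodule.mem_top)

noncomputable def ringEquivMonoidAlgebra (hu : ∀ δ, (u δ : R) ∈ g.comp δ) :
    R ≃+* MonoidAlgebra g.oneSubring Δ :=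
  (RingEquiv.ofBijective _ ⟨g.lift_injective u hu, g.lift_surjective u hu⟩).symm

end Units

end Grading

theorem mul_comm_of_ringEquiv_monoidAlgebra {R B G : Type*} [CommSemiring R] [Semiring B]
    [Nontrivial B] [Monoid G] (e : R ≃+* MonoidAlgebra B G) (x y : G) : x * y = y * x := by
  apply MonoidAlgebra.of_injective (R := B)
  apply e.symm.injective
  rw [map_mul, map_mul, map_mul, map_mul, mul_comm]

section MonoidAlgebra

variable {R : Type u} [CommRing R] {B : Type*} [Ring B] {G : Type v} [CommGroup G]

noncomputable def Grading.ofMonoidAlgebra (e : R ≃+* MonoidAlgebra B G) : Grading R G :=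
  let Φ : (G →₀ B) ≃ₗ[ℤ] R :=
    (MonoidAlgebra.coeffAddEquiv.symm.trans e.symm.toAddEquiv).toIntLinearEquiv
  ofIntSubmodule (fun x => (LinearMap.range (Finsupp.lsingle x)).map Φ.toLinearMap)
    (by
      rintro γ δ _ _ ⟨_, ⟨a, rfl⟩, rfl⟩ ⟨_, ⟨b, rfl⟩, rfl⟩
      refine ⟨_, ⟨a * b, rfl⟩, ?_⟩
      show e.symm (MonoidAlgebra.single _ _) =
        e.symm (MonoidAlgebra.single _ _) * e.symm (MonoidAlgebra.single _ _)
      rw [← map_mul, MonoidAlgebra.single_mul_single])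
    (Φ.toLinearMap.iSupIndep_map Φ.injective (iSupIndep_range_lsingle G ℤ B))
    (by rw [← Submodule.map_iSup, Finsupp.iSup_lsingle_range, Submodule.map_top,
      LinearEquiv.range])

theorem Grading.single_mem_ofMonoidAlgebra (e : R ≃+* MonoidAlgebra B G) (x : G) (b : B) :
    e.symm (MonoidAlgebra.single x b) ∈ (Grading.ofMonoidAlgebra e).comp x :=
  ⟨_, ⟨b, rfl⟩, rfl⟩

end MonoidAlgebra

theorem exists_pow_two_mul_add_one_eq_pow {M : Type*} [Monoid M] {x : M} {m n : ℕ}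
    (hmn : m < n) (h : x ^ m = x ^ n) : ∃ a, x ^ (2 * a + 1) = x ^ a := by
  obtain ⟨p, rfl⟩ : ∃ p, n = m + (p + 1) := ⟨n - m - 1, by omega⟩
  have hper : ∀ k, x ^ (m + k * (p + 1)) = x ^ m := by
    intro k
    induction k with
    | zero => simp
    | succ k ih => rw [add_mul, one_mul, ← add_assoc, pow_add, ih, ← pow_add, ← h]
  refine ⟨m + (m * p + p), ?_⟩
  calc x ^ (2 * (m + (m * p + p)) + 1) = x ^ (m + (m + 1) * (p + 1)) * x ^ (m * p + p) := by
        rw [← pow_add]; ring_nf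
    _ = x ^ (m + (m * p + p)) := by rw [hper, ← pow_add]

theorem Monoid.End.exists_pow_eq_pow_of_finite_range {M : Type*} [MulOneClass M]
    {T : Monoid.End M} (hT : (Set.range T).Finite) : ∃ m n, m < n ∧ T ^ m = T ^ n := by
  have := hT.to_subtype
  have hmaps : ∀ k : ℕ, Set.MapsTo ⇑(T ^ k) (Set.range T) (Set.range T) := by
    rintro k _ ⟨x, rfl⟩
    exact ⟨(T ^ k) x, DFunLike.congr_fun (Commute.self_pow T k).eq x⟩
  obtain ⟨m, n, hmn, heq⟩ := Set.finite_univ.exists_lt_map_eq_of_forall_mem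
    (f := fun k => (hmaps k).restrict) (fun _ => Set.mem_univ _)
  refine ⟨m + 1, n + 1, by omega, DFunLike.ext _ _ fun x => ?_⟩
  rw [pow_succ, pow_succ]
  exact congrArg Subtype.val (congrFun heq ⟨T x, x, rfl⟩)

theorem exists_pow_comp_eq_one {Γ U : Type*} [MulOneClass Γ] [MulOneClass U] (d : U →* Γ)
    (h : ∀ f : Γ →* U, (∀ γ, f (d (f γ)) = f γ) → f = 1) (f : Γ →* U)
    (hfin : (Set.range fun γ => d (f γ)).Finite) :
    ∃ n, 0 < n ∧ ∀ γ, (fun x => d (f x))^[n] γ = 1 := by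
  let T : Monoid.End Γ := d.comp f
  obtain ⟨m, n, hmn, hT⟩ := Monoid.End.exists_pow_eq_pow_of_finite_range (T := T) hfin
  obtain ⟨a, ha⟩ := exists_pow_two_mul_add_one_eq_pow hmn hT
  have hidem : f.comp (T ^ a) = 1 := h _ fun γ => by
    change f ((T ^ a * T * T ^ a) γ) = f ((T ^ a) γ)
    rw [← pow_succ, ← pow_add, show a + 1 + a = 2 * a + 1 by ring, ha]
  refine ⟨a + 1, a.succ_pos, fun γ => ?_⟩
  change (T ^ (a + 1)) γ = 1
  rw [pow_succ']
  change d (f ((T ^ a) γ)) = 1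
  rw [show f ((T ^ a) γ) = 1 from DFunLike.congr_fun hidem γ, map_one]

section Stark

variable {A : Type u} [CommRing A] {Γ : Type u} [CommGroup Γ] (gr : Grading A Γ)
  (d : CommGroup.torsion Aˣ →* Γ)

theorem finite_range_degree [Nontrivial A] [Module.Finite ℤ A]
    (hd : ∀ ζ : CommGroup.torsion Aˣ, ((ζ : Aˣ) : A) ∈ gr.comp (d ζ)) : (Set.range d).Finite :=
  gr.finite_setOf_comp_ne_bot.subset <| by
    rintro _ ⟨ζ, rfl⟩ hbot
    have := hd ζ
    rw [hbot, AddSubgroup.mem_bot] at this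
    exact Units.ne_zero _ this

theorem not_isStark_of_ne_one (hd : ∀ ζ : CommGroup.torsion Aˣ, ((ζ : Aˣ) : A) ∈ gr.comp (d ζ))
    (f : Γ →* CommGroup.torsion Aˣ) (hf : ∀ γ, f (d (f γ)) = f γ) (hne : f ≠ 1) :
    ¬ IsStark A := by
  intro hS
  have : Nontrivial f.range :=
    (Subgroup.nontrivial_iff_ne_bot _).mpr (mt MonoidHom.range_eq_bot_iff.mp hne)
  let u : f.range →* Aˣ := (CommGroup.torsion Aˣ).subtype.comp f.range.subtype
  have hu : ∀ ζ : f.range, (u ζ : A) ∈ (gr.map f.rangeRestrict).comp ζ := by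
    rintro ⟨_, γ, rfl⟩
    have hdeg : f.rangeRestrict (d (f γ)) = ⟨f γ, γ, rfl⟩ := Subtype.ext (hf γ)
    have := Grading.mem_map_comp f.rangeRestrict (hd (f γ))
    rwa [hdeg] at this
  exact (hS _ inferInstance f.range inferInstance this).false
    ((gr.map f.rangeRestrict).ringEquivMonoidAlgebra u hu)

theorem exists_fixedPt_ne_one_of_ringEquiv [Module.Finite ℤ A] (hgr : gr.IsUniversal)
    (hd : ∀ ζ : CommGroup.torsion Aˣ, ((ζ : Aˣ) : A) ∈ gr.comp (d ζ))
    {B G : Type u} [Ring B] [Nontrivial B] [CommGroup G] [Nontrivial G]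
    (e : A ≃+* MonoidAlgebra B G) :
    ∃ (f : Γ →* CommGroup.torsion Aˣ) (γ : Γ), γ ≠ 1 ∧ d (f γ) = γ := by
  have hsingle : ∀ x : G, e.symm (MonoidAlgebra.single x 1) ≠ 0 := fun x => by
    simp [MonoidAlgebra.single_eq_zero]
  have : Finite G := Set.finite_univ_iff.mp <|
    (Grading.ofMonoidAlgebra e).finite_setOf_comp_ne_bot.subset fun x _ hbot => by
      have hmem := Grading.single_mem_ofMonoidAlgebra e x 1
      rw [hbot, AddSubgroup.mem_bot] at hmem
      exact hsingle x hmem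
  let ψ : G →* CommGroup.torsion Aˣ :=
    ((Units.map (e.symm.toMonoidHom.comp (MonoidAlgebra.of B G))).comp
      toUnits.toMonoidHom).codRestrict _ fun x =>
        MonoidHom.isOfFinOrder _ (isOfFinOrder_of_finite x)
  have hψ : ∀ x, ((ψ x : Aˣ) : A) = e.symm (MonoidAlgebra.single x 1) := fun _ => rfl
  obtain ⟨φ, hφ, -⟩ := hgr G inferInstance (Grading.ofMonoidAlgebra e)
  have hφψ : ∀ x, φ (d (ψ x)) = x := by
    intro x
    have hmem : e.symm (MonoidAlgebra.single x 1) ∈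
        (Grading.ofMonoidAlgebra e).comp (φ (d (ψ x))) := by
      rw [hφ, ← hψ]
      exact le_biSup gr.comp (show d (ψ x) ∈ φ ⁻¹' {φ (d (ψ x))} from rfl) (hd (ψ x))
    exact (Grading.ofMonoidAlgebra e).eq_of_mem_of_mem (hsingle x) hmem
      (Grading.single_mem_ofMonoidAlgebra e x 1)
  obtain ⟨x, hx⟩ := exists_ne (1 : G)
  refine ⟨ψ.comp φ, d (ψ x), fun h => hx ?_, by rw [MonoidHom.comp_apply, hφψ]⟩
  rw [← hφψ x, h, map_one]

theorem exists_fixedPt_ne_one_of_not_isStark [Nontrivial A] [Module.Finite ℤ A]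
    (hgr : gr.IsUniversal) (hd : ∀ ζ : CommGroup.torsion Aˣ, ((ζ : Aˣ) : A) ∈ gr.comp (d ζ))
    (hns : ¬ IsStark A) :
    ∃ (f : Γ →* CommGroup.torsion Aˣ) (γ : Γ), γ ≠ 1 ∧ d (f γ) = γ := by
  simp only [IsStark, not_forall, not_isEmpty_iff] at hns
  obtain ⟨B, _, G, _, _, ⟨e⟩⟩ := hns
  have : Nontrivial B := by
    by_contra h
    rw [not_nontrivial_iff_subsingleton] at h
    exact not_subsingleton A e.toEquiv.subsingleton
  let _ : CommGroup G :=
    { ‹Group G› with mul_comm := mul_comm_of_ringEquiv_monoidAlgebra (G := G) e }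
  exact exists_fixedPt_ne_one_of_ringEquiv gr d hgr hd e

end Stark

theorem stark_tfae_general
    {A : Type u} [CommRing A] [Module.Finite ℤ A]
    (hconn : IsConnectedRing A)
    {Γ : Type u} [CommGroup Γ] (gr : Grading A Γ) (hgr : gr.IsUniversal)
    (d : CommGroup.torsion Aˣ →* Γ)
    (hd : ∀ ζ : CommGroup.torsion Aˣ, ((ζ : Aˣ) : A) ∈ gr.comp (d ζ)) :
    List.TFAE
      [IsStark A,
       ∀ f : Γ →* CommGroup.torsion Aˣ, (∀ γ, f (d (f γ)) = f γ) → f = 1,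
       ∀ f : Γ →* CommGroup.torsion Aˣ, ∃ n : ℕ, 0 < n ∧
         ∀ γ : Γ, (fun x : Γ => d (f x))^[n] γ = 1] := by
  have : Nontrivial A := hconn.1
  tfae_have 1 → 2 := fun hS f hf =>
    by_contra fun hne => not_isStark_of_ne_one gr d hd f hf hne hS
  tfae_have 2 → 3 := fun h2 f => exists_pow_comp_eq_one d h2 f <|
    (finite_range_degree gr d hd).subset (Set.range_comp_subset_range f d)
  tfae_have 3 → 1 := fun h3 => by
    by_contra hns
    obtain ⟨f, γ, hγ, hfix⟩ := exists_fixedPt_ne_one_of_not_isStark gr d hgr hd hns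
    obtain ⟨n, -, hn⟩ := h3 f
    exact hγ ((Function.iterate_fixed hfix n).symm.trans (hn γ))
  tfae_finish

/-- Let `A` be a connected reduced order with universal grading
`(Γ, (A_γ))` and degree map `d : μ(A) → Γ`. The following are equivalent: (i) `A` is stark;
(ii) the only `f ∈ Hom(Γ, μ(A))` with `f∘d∘f = f` is the trivial homomorphism;
(iii) for every `f ∈ Hom(Γ, μ(A))` the endomorphism `d∘f` of `Γ` is nilpotent. -/
theorem stark_tfae
    {A : Type u} [CommRing A] [Module.Free ℤ A] [Module.Finite ℤ A] [IsReduced A]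
    (hconn : IsConnectedRing A)
    {Γ : Type u} [CommGroup Γ] (gr : Grading A Γ) (hgr : gr.IsUniversal)
    (d : CommGroup.torsion Aˣ →* Γ)
    (hd : ∀ ζ : CommGroup.torsion Aˣ, ((ζ : Aˣ) : A) ∈ gr.comp (d ζ)) :
    List.TFAE
      [IsStark A,
       ∀ f : Γ →* CommGroup.torsion Aˣ, (∀ γ, f (d (f γ)) = f γ) → f = 1,
       ∀ f : Γ →* CommGroup.torsion Aˣ, ∃ n : ℕ, 0 < n ∧
         ∀ γ : Γ, (fun x : Γ => d (f x))^[n] γ = 1] :=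
  stark_tfae_general hconn gr hgr d hd
end

section
/- Let R be an order whose additive group is generated by its autopotent elements. Then R is reduced. -/
/-!
Over `ℚ`, multiplication by an autopotent element `x` is a semisimple endomorphism of
`ℚ ⊗[ℤ] R`, being annihilated by the separable polynomial `X ^ (n + 1) - X`. Multiplication
operators commute, and sums of commuting semisimple endomorphisms of a finite-dimensional space
over a perfect field are semisimple, so multiplication by every element of `ℚ ⊗[ℤ] R` is
semisimple. A nilpotent semisimple endomorphism vanishes, hence `ℚ ⊗[ℤ] R` is reduced, and so is
`R`, which embeds into it because it is torsion-free.
-/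

open Polynomial TensorProduct

def IsAutopotent {M : Type*} [Monoid M] (x : M) : Prop :=
  ∃ n : ℕ, 0 < n ∧ x ^ (n + 1) = x

theorem IsAutopotent.map {M N F : Type*} [Monoid M] [Monoid N] [FunLike F M N]
    [MonoidHomClass F M N] (f : F) {x : M} (hx : IsAutopotent x) : IsAutopotent (f x) := by
  obtain ⟨n, hn, hx⟩ := hx
  exact ⟨n, hn, by rw [← map_pow, hx]⟩

theorem AddSubgroup.map_mem_closure_isAutopotent {R S F : Type*} [Ring R] [Ring S]
    [FunLike F R S] [RingHomClass F R S] (f : F) {x : R}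
    (hx : x ∈ closure {y : R | IsAutopotent y}) : f x ∈ closure {y : S | IsAutopotent y} :=
  (closure_le (K := comap (f : R →+ S) (closure {y : S | IsAutopotent y}))).2
    (fun _ hy ↦ subset_closure (hy.map f)) hx

theorem Polynomial.separable_X_pow_succ_sub_X {K : Type*} [Field K] [CharZero K] {n : ℕ}
    (hn : 0 < n) : ((X : K[X]) ^ (n + 1) - X).Separable := by
  have hcop : IsCoprime (X : K[X]) (X ^ n - C 1) :=
    ⟨X ^ (n - 1), -1, by rw [← pow_succ, Nat.sub_add_cancel hn, C_1]; ring⟩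
  have h := separable_X.mul (separable_X_pow_sub_C 1 (Nat.cast_ne_zero.2 hn.ne') one_ne_zero) hcop
  rwa [C_1, mul_sub, ← pow_succ', mul_one] at h

section

variable {K A : Type*} [Field K] [CommRing A] [Algebra K A]

theorem IsAutopotent.isSemisimple_lmul [CharZero K] {a : A} (ha : IsAutopotent a) :
    (Algebra.lmul K A a).IsSemisimple := by
  obtain ⟨n, hn, ha⟩ := ha
  refine Module.End.isSemisimple_of_squarefree_aeval_eq_zero
    (separable_X_pow_succ_sub_X hn).squarefree ?_
  rw [map_sub, map_pow, aeval_X, ← map_pow, ha, sub_self]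

theorem isSemisimple_lmul_of_mem_closure [PerfectField K] [FiniteDimensional K A] {S : Set A}
    (hS : ∀ a ∈ S, (Algebra.lmul K A a).IsSemisimple) {a : A} (ha : a ∈ AddSubgroup.closure S) :
    (Algebra.lmul K A a).IsSemisimple := by
  induction ha using AddSubgroup.closure_induction with
  | mem a ha => exact hS a ha
  | zero => rw [map_zero]; exact Module.End.isSemisimple_zero
  | add a b _ _ ha hb => rw [map_add]; exact ha.add_of_commute ((Commute.all a b).map _) hb
  | neg a _ ha => rwa [map_neg, Module.End.isSemisimple_neg]

theorem eq_zero_of_isNilpotent_of_isSemisimple_lmul {a : A} (hnil : IsNilpotent a)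
    (hss : (Algebra.lmul K A a).IsSemisimple) : a = 0 := by
  have := Module.End.eq_zero_of_isNilpotent_isSemisimple (hnil.map (Algebra.lmul K A)) hss
  simpa using congr($this 1)

theorem eq_zero_of_isNilpotent_of_mem_closure_isAutopotent [CharZero K] [FiniteDimensional K A]
    {a : A} (hnil : IsNilpotent a) (ha : a ∈ AddSubgroup.closure {x : A | IsAutopotent x}) :
    a = 0 :=
  eq_zero_of_isNilpotent_of_isSemisimple_lmul (K := K) hnil <|
    isSemisimple_lmul_of_mem_closure (fun _ hx ↦ IsAutopotent.isSemisimple_lmul hx) ha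

end

/-- An order whose additive group is generated by its autopotent elements
(elements `x` with `x^(n+1) = x` for some `n ≥ 1`) is reduced. -/
theorem reduced_of_generated_by_autopotents
    {R : Type u} [CommRing R] [Module.Free ℤ R] [Module.Finite ℤ R]
    (h : AddSubgroup.closure {x : R | ∃ n : ℕ, 0 < n ∧ x ^ (n + 1) = x} = ⊤) :
    IsReduced R := by
  refine ⟨fun z hz ↦ ?_⟩
  let j : R →ₐ[ℤ] ℚ ⊗[ℤ] R := Algebra.TensorProduct.includeRight
  have hj : Function.Injective j :=
    Algebra.TensorProduct.includeRight_injective (algebraMap ℤ ℚ).injective_int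
  have hjz : j z ∈ AddSubgroup.closure {x | IsAutopotent x} :=
    AddSubgroup.map_mem_closure_isAutopotent j (h ▸ AddSubgroup.mem_top z)
  exact hj <| (eq_zero_of_isNilpotent_of_mem_closure_isAutopotent (K := ℚ) (hz.map j) hjz).trans
    (map_zero j).symm
end
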